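/- Suppose the category of simplicial sets is equipped with a model category structure whose cofibrations are exactly the monomorphisms, and suppose every 2-Segal spine inclusion is a weak equivalence in this model structure. Then every generalized 2-Segal horn inclusion Λ^S[n] ↪ Δ[n] is a weak equivalence in this model structure. -/

import Mathlib

open CategoryTheory CategoryTheory.Limits

set_option linter.unusedVariables false

namespace Q2S

open Simplicial

/-! ## Triangulations of the (n+1)-gon -/

/-- `(p, q)` is a chord of one of the triangles in `tris`. -/
def IsChord (tris : Finset (ℕ × ℕ × ℕ)) (p q : ℕ) : Prop :=
  ∃ t ∈ tris, (p, q) = (t.1, t.2.1) ∨ (p, q) = (t.2.1, t.2.2) ∨ (p, q) = (t.1, t.2.2)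

/-- A triangulation of the `(n+1)`-gon with vertices `0, …, n`: a set of `n - 1`
triples `a < b < c` of vertices whose chords are pairwise noncrossing. -/
structure Triangulation (n : ℕ) where
  tris : Finset (ℕ × ℕ × ℕ)
  card_eq : tris.card = n - 1
  lt₁ : ∀ t ∈ tris, t.1 < t.2.1
  lt₂ : ∀ t ∈ tris, t.2.1 < t.2.2
  le_n : ∀ t ∈ tris, t.2.2 ≤ n
  noncrossing : ∀ p q r s : ℕ, IsChord tris p q → IsChord tris r s →
    ¬(p < r ∧ r < q ∧ q < s)

/-- A vertex `i` is extreme in a triangulation of the `(n+1)`-gon. -/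
def Triangulation.IsExtreme {n : ℕ} (T : Triangulation n) (i : ℕ) : Prop :=
  (0 < i ∧ i < n ∧ (i - 1, i, i + 1) ∈ T.tris) ∨
  (i = 0 ∧ (0, 1, n) ∈ T.tris) ∨
  (i = n ∧ (0, n - 1, n) ∈ T.tris)

/-! ## Subcomplexes of the standard simplex -/

/-- The simplicial subset of `Δ[n]` cut out by a predicate on simplices which is closed
under the simplicial operators. -/
def simplexSub (n : ℕ) (P : ∀ ⦃m : SimplexCategoryᵒᵖ⦄, Δ[n].obj m → Prop)
    (hP : ∀ ⦃m m' : SimplexCategoryᵒᵖ⦄ (φ : m ⟶ m') (α : Δ[n].obj m), P α → P (Δ[n].map φ α)) :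
    SSet where
  obj m := { α : Δ[n].obj m // P α }
  map φ := TypeCat.ofHom fun x => ⟨Δ[n].map φ x.1, hP φ x.1 x.2⟩
  map_id m := by ext x; exact Δ[n].map_id_apply m x.1
  map_comp φ ψ := by ext x; exact Δ[n].map_comp_apply φ ψ x.1

/-- The inclusion of such a simplicial subset into `Δ[n]`. -/
def simplexSubIncl (n : ℕ) (P : ∀ ⦃m : SimplexCategoryᵒᵖ⦄, Δ[n].obj m → Prop)
    (hP : ∀ ⦃m m' : SimplexCategoryᵒᵖ⦄ (φ : m ⟶ m') (α : Δ[n].obj m), P α → P (Δ[n].map φ α)) :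
    simplexSub n P hP ⟶ Δ[n] where
  app m := TypeCat.ofHom fun x => x.1
  naturality _ _ _ := rfl

lemma genHorn_closed (n : ℕ) (S : Set (Fin (n + 1))) ⦃m m' : SimplexCategoryᵒᵖ⦄
    (φ : m ⟶ m') (α : Δ[n].obj m) (h : ∃ i ∈ S, ∀ k, SSet.stdSimplex.asOrderHom α k ≠ i) :
    ∃ i ∈ S, ∀ k, SSet.stdSimplex.asOrderHom (Δ[n].map φ α) k ≠ i := by
  obtain ⟨i, hiS, hi⟩ := h
  exact ⟨i, hiS, fun k => hi _⟩

/-- The generalized horn `Λ^S[n] ⊆ Δ[n]`: the union of the faces `dᵢ(Δ[n])` for `i ∈ S`.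
Its simplices are those maps `[m] → [n]` whose image misses some `i ∈ S`. -/
def genHorn (n : ℕ) (S : Set (Fin (n + 1))) : SSet :=
  simplexSub n (fun _ α => ∃ i ∈ S, ∀ k, SSet.stdSimplex.asOrderHom α k ≠ i) (genHorn_closed n S)

/-- The inclusion `Λ^S[n] ↪ Δ[n]` of a generalized horn. -/
def genHornIncl (n : ℕ) (S : Set (Fin (n + 1))) : genHorn n S ⟶ Δ[n] :=
  simplexSubIncl n _ _

/-! ## Broken subsets and 2-Segal horns -/

/-- A subset `S ⊆ {0, …, n}` is broken. -/
def BrokenSet {n : ℕ} (S : Set (Fin (n + 1))) : Prop :=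
  ∃ a b c d : Fin (n + 1), a < b ∧ b < c ∧ c < d ∧
    ((a ∈ S ∧ c ∈ S ∧ b ∉ S ∧ d ∉ S) ∨ (b ∈ S ∧ d ∈ S ∧ a ∉ S ∧ c ∉ S))

/-- The pair `{i, j}` with `i < j` is broken in `{0, …, n}`:
`i < j - 1` and not (`i = 0` and `j = n`). -/
def PairBroken {n : ℕ} (i j : Fin (n + 1)) : Prop :=
  (i : ℕ) + 1 < (j : ℕ) ∧ ¬((i : ℕ) = 0 ∧ (j : ℕ) = n)

/-- The 2-Segal horn `Λ^{i,j}[n]`: the union of all faces of `Δ[n]` except `dᵢ` and `dⱼ`. -/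
def twoSegalHorn (n : ℕ) (i j : Fin (n + 1)) : SSet :=
  genHorn n ({i, j}ᶜ)

/-- The inclusion of the 2-Segal horn `Λ^{i,j}[n] ↪ Δ[n]`. -/
def twoSegalHornIncl (n : ℕ) (i j : Fin (n + 1)) : twoSegalHorn n i j ⟶ Δ[n] :=
  genHornIncl n _

/-- A simplicial set is a quasi-2-Segal set if it has fillers for all 2-Segal horns. -/
def IsQuasiTwoSegal (X : SSet) : Prop :=
  ∀ (n : ℕ) (i j : Fin (n + 1)), 3 ≤ n → PairBroken i j →
    ∀ f : twoSegalHorn n i j ⟶ X, ∃ g : Δ[n] ⟶ X, twoSegalHornIncl n i j ≫ g = f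

/-! ## 2-Segal spines -/

lemma spine_closed {n : ℕ} (T : Triangulation n) ⦃m m' : SimplexCategoryᵒᵖ⦄
    (φ : m ⟶ m') (α : Δ[n].obj m)
    (h : ∃ t ∈ T.tris, ∀ k, (SSet.stdSimplex.asOrderHom α k : ℕ) = t.1 ∨
      (SSet.stdSimplex.asOrderHom α k : ℕ) = t.2.1 ∨ (SSet.stdSimplex.asOrderHom α k : ℕ) = t.2.2) :
    ∃ t ∈ T.tris, ∀ k, (SSet.stdSimplex.asOrderHom (Δ[n].map φ α) k : ℕ) = t.1 ∨
      (SSet.stdSimplex.asOrderHom (Δ[n].map φ α) k : ℕ) = t.2.1 ∨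
      (SSet.stdSimplex.asOrderHom (Δ[n].map φ α) k : ℕ) = t.2.2 := by
  obtain ⟨t, htT, ht⟩ := h
  exact ⟨t, htT, fun k => ht _⟩

/-- The 2-Segal spine associated to a triangulation `T` of the `(n+1)`-gon:
the union of the 2-dimensional faces of `Δ[n]` indexed by the triangles of `T`. -/
def twoSegalSpine (n : ℕ) (T : Triangulation n) : SSet :=
  simplexSub n
    (fun _ α => ∃ t ∈ T.tris, ∀ k, (SSet.stdSimplex.asOrderHom α k : ℕ) = t.1 ∨
      (SSet.stdSimplex.asOrderHom α k : ℕ) = t.2.1 ∨ (SSet.stdSimplex.asOrderHom α k : ℕ) = t.2.2)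
    (spine_closed T)

/-- The 2-Segal spine inclusion. -/
def twoSegalSpineIncl (n : ℕ) (T : Triangulation n) : twoSegalSpine n T ⟶ Δ[n] :=
  simplexSubIncl n _ _

end Q2S

namespace Q2S

universe v u

variable {C : Type u} [Category.{v} C]

/-! ## Retracts, transfinite composition, weakly saturated classes -/

/-- `f` is a retract of `g` in the arrow category. -/
def IsRetractOf {X Y Z W : C} (f : X ⟶ Y) (g : Z ⟶ W) : Prop :=
  ∃ (a : X ⟶ Z) (b : Z ⟶ X) (c : Y ⟶ W) (d : W ⟶ Y),
    a ≫ b = 𝟙 X ∧ c ≫ d = 𝟙 Y ∧ a ≫ g = f ≫ c ∧ g ≫ d = b ≫ f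

/-- A class of morphisms is stable under retracts. -/
def StableUnderRetracts (P : MorphismProperty C) : Prop :=
  ∀ ⦃X Y Z W : C⦄ (f : X ⟶ Y) (g : Z ⟶ W), IsRetractOf f g → P g → P f

/-- The inclusion functor of `Set.Iio j` into a preorder `J`. -/
def iioFunctor {J : Type*} [Preorder J] (j : J) : Set.Iio j ⥤ J :=
  Monotone.functor (f := (Subtype.val : Set.Iio j → J)) (fun _ _ h => h)

/-- The cocone on the restriction of `F` to `Set.Iio j` with apex `F.obj j`. -/
def coconeAt {J : Type*} [Preorder J] (F : J ⥤ C) (j : J) :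
    Cocone (iioFunctor j ⋙ F) where
  pt := F.obj j
  ι :=
    { app := fun i => F.map (homOfLE i.2.le)
      naturality := fun a b u => by
        dsimp [iioFunctor, Monotone.functor]
        rw [← F.map_comp, Category.comp_id]
        rfl }

/-- A class of morphisms is stable under transfinite composition: for any well-ordered
diagram whose successor maps lie in `P` and which is continuous at limit stages, the
map from the bottom object to any colimit lies in `P`. -/
def StableUnderTransfiniteComposition (P : MorphismProperty C) : Prop :=
  ∀ (J : Type) [LinearOrder J] [SuccOrder J] [OrderBot J] [WellFoundedLT J]
    (F : J ⥤ C),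
    (∀ j : J, ¬IsMax j → P (F.map (homOfLE (Order.le_succ j)))) →
    (∀ j : J, Order.IsSuccLimit j → Nonempty (IsColimit (coconeAt F j))) →
    ∀ (c : Cocone F), IsColimit c → P (c.ι.app ⊥)

/-- A weakly saturated class of morphisms: one stable under cobase change (pushouts),
retracts, and transfinite composition. -/
def WeaklySaturated (P : MorphismProperty C) : Prop :=
  P.IsStableUnderCobaseChange ∧ StableUnderRetracts P ∧ StableUnderTransfiniteComposition P

/-- The weakly saturated class generated by `S`: the smallest weakly saturated class
containing `S`. -/
def Saturation (S : MorphismProperty C) : MorphismProperty C :=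
  fun _ _ f => ∀ P : MorphismProperty C, WeaklySaturated P → S ≤ P → P f

/-- The class of morphisms which are cobase changes (pushouts) of morphisms in `S`. -/
def PushoutsOf (S : MorphismProperty C) : MorphismProperty C := fun X Y f =>
  ∃ (A B : C) (g : A ⟶ B) (_ : S g) (t : A ⟶ X) (u : B ⟶ Y), IsPushout g t u f

/-- The closure of a class of morphisms under finite composition. -/
inductive FinComp (S : MorphismProperty C) : ∀ ⦃X Y : C⦄, (X ⟶ Y) → Prop
  | of {X Y : C} (f : X ⟶ Y) : S f → FinComp S f
  | comp {X Y Z : C} (f : X ⟶ Y) (g : Y ⟶ Z) :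
      FinComp S f → FinComp S g → FinComp S (f ≫ g)

end Q2S

/-! ## Model structures -/

namespace Q2S

open CategoryTheory CategoryTheory.Limits

universe w z

/-- A model structure on a category `C`: classes of weak equivalences, fibrations and
cofibrations satisfying the usual axioms (two-out-of-three, retracts, lifting,
factorization). -/
structure ModelStructure (C : Type w) [Category.{z} C] where
  W : MorphismProperty C
  Fib : MorphismProperty C
  Cof : MorphismProperty C
  w_id : ∀ X : C, W (𝟙 X)
  w_twoOutOfThree : ∀ ⦃X Y Z : C⦄ (f : X ⟶ Y) (g : Y ⟶ Z),
    (W f → W g → W (f ≫ g)) ∧ (W f → W (f ≫ g) → W g) ∧ (W g → W (f ≫ g) → W f)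
  w_retract : StableUnderRetracts W
  fib_retract : StableUnderRetracts Fib
  cof_retract : StableUnderRetracts Cof
  lift_trivCof_fib : ∀ ⦃A B X Y : C⦄ (i : A ⟶ B) (p : X ⟶ Y),
    Cof i → W i → Fib p → HasLiftingProperty i p
  lift_cof_trivFib : ∀ ⦃A B X Y : C⦄ (i : A ⟶ B) (p : X ⟶ Y),
    Cof i → Fib p → W p → HasLiftingProperty i p
  factor_cof_trivFib : ∀ ⦃X Y : C⦄ (f : X ⟶ Y),
    ∃ (Z : C) (i : X ⟶ Z) (p : Z ⟶ Y), Cof i ∧ Fib p ∧ W p ∧ i ≫ p = f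
  factor_trivCof_fib : ∀ ⦃X Y : C⦄ (f : X ⟶ Y),
    ∃ (Z : C) (i : X ⟶ Z) (p : Z ⟶ Y), Cof i ∧ W i ∧ Fib p ∧ i ≫ p = f

/-- An object is fibrant if the map to the terminal object is a fibration. -/
def ModelStructure.FibrantObj {C : Type w} [Category.{z} C] [HasTerminal C]
    (M : ModelStructure C) (X : C) : Prop :=
  M.Fib (terminal.from X)

end Q2S

open Simplicial


namespace Q2S

section ModelLemmas

variable {C : Type*} [Category C] (M : ModelStructure C)

/-- trivial cofibration -/
def TCof : MorphismProperty C := fun _ _ f => M.Cof f ∧ M.W f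

lemma w_of_iso {X Y : C} (f : X ⟶ Y) [IsIso f] : M.W f := by
  apply M.w_retract f (𝟙 X) _ (M.w_id X)
  exact ⟨𝟙 X, 𝟙 X, inv f, f, by simp, by simp, by simp, by simp⟩

lemma tcof_llp {A B X Y : C} {i : A ⟶ B} {p : X ⟶ Y} (hi : TCof M i) (hp : M.Fib p) :
    HasLiftingProperty i p := M.lift_trivCof_fib i p hi.1 hi.2 hp

lemma llp_tcof {X Y : C} (f : X ⟶ Y)
    (h : ∀ ⦃Z W : C⦄ (p : Z ⟶ W), M.Fib p → HasLiftingProperty f p) : TCof M f := by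
  obtain ⟨Z, i, p, hi, hiw, hp, hfac⟩ := M.factor_trivCof_fib f
  haveI := h p hp
  have sq : CommSq i f p (𝟙 Y) := ⟨by simpa using hfac⟩
  have hret : IsRetractOf f i :=
    ⟨𝟙 X, 𝟙 X, sq.lift, p, by simp, by simp [sq.fac_right], by simp [sq.fac_left], by simpa using hfac⟩
  exact ⟨M.cof_retract f i hret hi, M.w_retract f i hret hiw⟩

lemma tcof_of_iso {X Y : C} (f : X ⟶ Y) [IsIso f] : TCof M f :=
  llp_tcof M f (fun _ _ p _ => inferInstance)

lemma tcof_comp {X Y Z : C} {f : X ⟶ Y} {g : Y ⟶ Z} (hf : TCof M f) (hg : TCof M g) :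
    TCof M (f ≫ g) := by
  refine llp_tcof M _ (fun _ _ p hp => ?_)
  haveI := tcof_llp M hf hp; haveI := tcof_llp M hg hp
  infer_instance

lemma tcof_cancel_right {X Y Z : C} {f : X ⟶ Y} {g : Y ⟶ Z} (hf : TCof M f)
    (hfg : M.W (f ≫ g)) (hg : M.Cof g) : TCof M g :=
  ⟨hg, (M.w_twoOutOfThree f g).2.1 hf.2 hfg⟩

lemma w_comp_of_w {X Y Z : C} {f : X ⟶ Y} {g : Y ⟶ Z} (hf : M.W f) (hg : M.W g) :
    M.W (f ≫ g) := (M.w_twoOutOfThree f g).1 hf hg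

lemma tcof_of_arrow_iso {A B A' B' : C} {f : A ⟶ B} {f' : A' ⟶ B'}
    (eA : A ≅ A') (eB : B ≅ B') (comm : eA.hom ≫ f' = f ≫ eB.hom)
    (h : TCof M f') : TCof M f := by
  have hret : IsRetractOf f f' := by
    refine ⟨eA.hom, eA.inv, eB.hom, eB.inv, by simp, by simp, comm, ?_⟩
    have : f' = eA.inv ≫ f ≫ eB.hom := by rw [← comm]; simp
    rw [this]; simp
  exact ⟨M.cof_retract f f' hret h.1, M.w_retract f f' hret h.2⟩

end ModelLemmas

/-! ## Subcomplexes of the standard simplex, as a lattice of predicates -/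

/-- A subcomplex of `Δ[n]`, given by a predicate closed under the simplicial operators. -/
structure Sub.{w} (n : ℕ) where
  P : ∀ ⦃m : SimplexCategoryᵒᵖ⦄, (Δ[n] : SSet.{w}).obj m → Prop
  closed : ∀ ⦃m m' : SimplexCategoryᵒᵖ⦄ (φ : m ⟶ m') (α : Δ[n].obj m), P α → P (Δ[n].map φ α)

namespace Sub

variable {n : ℕ}

def toSSet (A : Sub n) : SSet := simplexSub n A.P A.closed

def ι (A : Sub n) : A.toSSet ⟶ Δ[n] := simplexSubIncl n A.P A.closed

def Le (A B : Sub n) : Prop := ∀ ⦃m : SimplexCategoryᵒᵖ⦄ (α : Δ[n].obj m), A.P α → B.P α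

def homOfLe {A B : Sub n} (h : A.Le B) : A.toSSet ⟶ B.toSSet where
  app m := TypeCat.ofHom fun (x : {α : Δ[n].obj m // A.P α}) => (⟨x.1, h x.1 x.2⟩ : {α : Δ[n].obj m // B.P α})
  naturality _ _ _ := rfl

@[simp] lemma homOfLe_comp {A B C : Sub n} (h1 : A.Le B) (h2 : B.Le C) :
    homOfLe h1 ≫ homOfLe h2 = homOfLe (fun _ α hα => h2 α (h1 α hα)) := rfl

@[simp] lemma homOfLe_comp_ι {A B : Sub n} (h : A.Le B) : homOfLe h ≫ B.ι = A.ι := rfl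

instance mono_ι (A : Sub n) : Mono A.ι := by
  haveI : ∀ m, Mono (A.ι.app m) := fun m => by
    rw [CategoryTheory.mono_iff_injective]; exact fun x y h => Subtype.ext h
  exact NatTrans.mono_of_mono_app _

instance mono_homOfLe {A B : Sub n} (h : A.Le B) : Mono (homOfLe h) := by
  haveI : ∀ m, Mono ((homOfLe h).app m) := fun m => by
    rw [CategoryTheory.mono_iff_injective]
    intro x y hxy
    have : x.1 = y.1 := congrArg (fun (t : B.toSSet.obj m) => t.1) hxy
    exact Subtype.ext this
  exact NatTrans.mono_of_mono_app _

def inter (A B : Sub n) : Sub n where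
  P _ α := A.P α ∧ B.P α
  closed _ _ φ α h := ⟨A.closed φ α h.1, B.closed φ α h.2⟩

def union (A B : Sub n) : Sub n where
  P _ α := A.P α ∨ B.P α
  closed _ _ φ α h := h.elim (fun h => Or.inl (A.closed φ α h)) (fun h => Or.inr (B.closed φ α h))

lemma inter_le_left (A B : Sub n) : (A.inter B).Le A := fun _ _ h => h.1
lemma inter_le_right (A B : Sub n) : (A.inter B).Le B := fun _ _ h => h.2
lemma le_union_left (A B : Sub n) : A.Le (A.union B) := fun _ _ h => Or.inl h
lemma le_union_right (A B : Sub n) : B.Le (A.union B) := fun _ _ h => Or.inr h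

/-- Isomorphic subcomplexes from equivalent predicates. -/
def isoOfEq (A B : Sub n) (h : ∀ ⦃m : SimplexCategoryᵒᵖ⦄ (α : Δ[n].obj m), A.P α ↔ B.P α) :
    A.toSSet ≅ B.toSSet where
  hom := homOfLe (fun _ α hα => (h α).1 hα)
  inv := homOfLe (fun _ α hα => (h α).2 hα)
  hom_inv_id := by apply SSet.hom_ext; intro m; ext x; exact Subtype.ext rfl
  inv_hom_id := by apply SSet.hom_ext; intro m; ext x; exact Subtype.ext rfl

@[simp] lemma isoOfEq_hom_comp_ι (A B : Sub n) (h) : (isoOfEq A B h).hom ≫ B.ι = A.ι := rfl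

end Sub

/-! ## The attachment lemma -/

section Attach

variable {n : ℕ}

/-- If `A ∩ B ↪ B` has the left lifting property against `p`, so does `A ↪ A ∪ B`. -/
lemma attach_llp (A B : Sub n) {X Y : SSet} (p : X ⟶ Y)
    (h : HasLiftingProperty (Sub.homOfLe (Sub.inter_le_right A B)) p) :
    HasLiftingProperty (Sub.homOfLe (Sub.le_union_left A B)) p := by
  classical
  constructor
  intro f g sq
  have winner : (Sub.homOfLe (Sub.inter_le_left A B) ≫ f) ≫ p =
      Sub.homOfLe (Sub.inter_le_right A B) ≫ (Sub.homOfLe (Sub.le_union_right A B) ≫ g) := by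
    rw [Category.assoc, sq.w]; rfl
  have sq' : CommSq (Sub.homOfLe (Sub.inter_le_left A B) ≫ f)
      (Sub.homOfLe (Sub.inter_le_right A B)) p (Sub.homOfLe (Sub.le_union_right A B) ≫ g) :=
    ⟨winner⟩
  haveI := h
  set l := sq'.lift with hl
  have hfacl : Sub.homOfLe (Sub.inter_le_right A B) ≫ l =
      Sub.homOfLe (Sub.inter_le_left A B) ≫ f := sq'.fac_left
  have hfacr : l ≫ p = Sub.homOfLe (Sub.le_union_right A B) ≫ g := sq'.fac_right
  have hagree : ∀ (m : SimplexCategoryᵒᵖ) (α : Δ[n].obj m) (hA : A.P α) (hB : B.P α),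
      l.app m ⟨α, hB⟩ = f.app m ⟨α, hA⟩ := by
    intro m α hA hB
    exact types_congr_hom (congrArg (fun t => t.app m) hfacl) ⟨α, hA, hB⟩
  set L : ∀ m : SimplexCategoryᵒᵖ, (A.union B).toSSet.obj m → X.obj m := fun m x =>
    if hx : A.P x.1 then f.app m ⟨x.1, hx⟩ else l.app m ⟨x.1, x.2.resolve_left hx⟩ with hLdef
  have hLpos : ∀ (m : SimplexCategoryᵒᵖ) (α : Δ[n].obj m) (hA : A.P α) (hu : (A.union B).P α),
      L m ⟨α, hu⟩ = f.app m ⟨α, hA⟩ := by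
    intro m α hA hu
    simp only [hLdef, dif_pos hA]
  have hLneg : ∀ (m : SimplexCategoryᵒᵖ) (α : Δ[n].obj m) (hB : B.P α) (hu : (A.union B).P α),
      L m ⟨α, hu⟩ = l.app m ⟨α, hB⟩ := by
    intro m α hB hu
    by_cases hA : A.P α
    · rw [hLpos m α hA hu]
      exact (hagree m α hA hB).symm
    · simp only [hLdef, dif_neg hA]
  refine ⟨⟨⟨{ app := fun m => TypeCat.ofHom (L m), naturality := ?_ }, ?_, ?_⟩⟩⟩
  · intro m m' φ
    ext x
    obtain ⟨α, hu⟩ := x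
    have hu' : (A.union B).P (Δ[n].map φ α) := (A.union B).closed φ α hu
    show L m' ⟨Δ[n].map φ α, hu'⟩ = X.map φ (L m ⟨α, hu⟩)
    by_cases hA : A.P α
    · rw [hLpos m α hA hu, hLpos m' _ (A.closed φ α hA) hu']
      exact types_congr_hom (f.naturality φ) ⟨α, hA⟩
    · have hB : B.P α := hu.resolve_left hA
      rw [hLneg m α hB hu, hLneg m' _ (B.closed φ α hB) hu']
      exact types_congr_hom (l.naturality φ) ⟨α, hB⟩
  · apply SSet.hom_ext; intro m; ext x
    obtain ⟨α, hA⟩ := x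
    show L m ⟨α, Or.inl hA⟩ = f.app m ⟨α, hA⟩
    exact hLpos m α hA _
  · apply SSet.hom_ext; intro m; ext x
    obtain ⟨α, hu⟩ := x
    show p.app m (L m ⟨α, hu⟩) = g.app m ⟨α, hu⟩
    by_cases hA : A.P α
    · rw [hLpos m α hA hu]
      exact types_congr_hom (congrArg (fun t => t.app m) sq.w) ⟨α, hA⟩
    · have hB : B.P α := hu.resolve_left hA
      rw [hLneg m α hB hu]
      exact types_congr_hom (congrArg (fun t => t.app m) hfacr) ⟨α, hB⟩

lemma attach_tcof (M : ModelStructure SSet) (A B : Sub n)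
    (h : TCof M (Sub.homOfLe (Sub.inter_le_right A B))) :
    TCof M (Sub.homOfLe (Sub.le_union_left A B)) := by
  refine llp_tcof M _ (fun _ _ p hp => ?_)
  exact attach_llp A B p (tcof_llp M h hp)

end Attach

end Q2S

namespace Q2S
/-! ## Compressing a subcomplex contained in a face -/

section Pull

open SimplexCategory

universe u

variable {n : ℕ}

/-- The compression of a simplex of `Δ[n+1]` (missing the vertex `i`) to `Δ[n]`. -/
def fdown {m : SimplexCategoryᵒᵖ} (α : (Δ[n+1] : SSet.{u}).obj m) (i : Fin (n+2)) :
    (Δ[n] : SSet.{u}).obj m :=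
  ULift.up (factor_δ (n := n) (m := m.unop.len) α.down i)

lemma fdown_map {m m' : SimplexCategoryᵒᵖ} (φ : m ⟶ m') (α : Δ[n+1].obj m) (i : Fin (n+2)) :
    fdown (Δ[n+1].map φ α) i = Δ[n].map φ (fdown α i) := rfl

/-- The pullback of a subcomplex of `Δ[n]` to a subcomplex of `Δ[n+1]` contained in
the `i`-th face. -/
def Sub.pull (i : Fin (n+2)) (B : Sub n) : Sub (n+1) where
  P _ α := (∀ k, SSet.stdSimplex.asOrderHom α k ≠ i) ∧ B.P (fdown α i)
  closed _ _ φ α h := ⟨fun k => h.1 _, by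
    rw [fdown_map]
    exact B.closed φ _ h.2⟩

lemma vert_eq_succAbove {m : SimplexCategoryᵒᵖ} (α : Δ[n+1].obj m) (i : Fin (n+2))
    (h : ∀ k, SSet.stdSimplex.asOrderHom α k ≠ i) (k) :
    SSet.stdSimplex.asOrderHom α k = i.succAbove (SSet.stdSimplex.asOrderHom (fdown α i) k) := by
  have := congrArg (fun f => f.toOrderHom k)
    (factor_δ_spec (n := n) (m := m.unop.len) α.down i h)
  exact this.symm

lemma delta_sigma_id (i : Fin (n+2)) :
    δ i ≫ σ (Fin.predAbove 0 i) = 𝟙 (SimplexCategory.mk n) := by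
  have h := factor_δ_spec (δ i) i (fun k => Fin.succAbove_ne i k)
  have h2 : factor_δ (δ i) i ≫ δ i = 𝟙 (SimplexCategory.mk n) ≫ δ i := by simpa using h
  exact cancel_mono (δ i) |>.1 h2

/-- The compression isomorphism. -/
def pullIso (i : Fin (n+2)) (B : Sub n) : (Sub.pull i B).toSSet ≅ B.toSSet where
  hom := { app := fun m => TypeCat.ofHom fun x => ⟨fdown x.1 i, x.2.2⟩, naturality := fun _ _ _ => rfl }
  inv :=
    { app := fun m => TypeCat.ofHom fun y => ⟨(⟨y.1.down ≫ δ i⟩ : Δ[n+1].obj m),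
        ⟨fun k => Fin.succAbove_ne i _, by
          have : fdown ((⟨y.1.down ≫ δ i⟩ : Δ[n+1].obj m)) i = y.1 := by
            dsimp [fdown, factor_δ]
            rw [Category.assoc, delta_sigma_id, Category.comp_id]
            rfl
          rw [this]
          exact y.2⟩⟩
      naturality := fun _ _ _ => rfl }
  hom_inv_id := by
    apply SSet.hom_ext; intro m; ext x
    refine Subtype.ext ?_
    show (⟨factor_δ (n := n) (m := m.unop.len) x.1.down i ≫ δ i⟩ : Δ[n+1].obj m) = x.1
    rw [factor_δ_spec (n := n) (m := m.unop.len) x.1.down i x.2.1]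
    rfl
  inv_hom_id := by
    apply SSet.hom_ext; intro m; ext y
    refine Subtype.ext ?_
    show fdown ((⟨y.1.down ≫ δ i⟩ : Δ[n+1].obj m)) i = y.1
    dsimp [fdown, factor_δ]
    rw [Category.assoc, delta_sigma_id, Category.comp_id]
    rfl

/-- The full subcomplex. -/
def subTop (n : ℕ) : Sub n where
  P _ _ := True
  closed _ _ _ _ _ := trivial

def topIso (n : ℕ) : (subTop n).toSSet ≅ Δ[n] where
  hom := (subTop n).ι
  inv := { app := fun m => TypeCat.ofHom fun α => ⟨α, trivial⟩, naturality := fun _ _ _ => rfl }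

/-- The face `dᵢ(Δ[n])` as a subcomplex of `Δ[n]`. -/
def faceSub (n : ℕ) (i : Fin (n+1)) : Sub n where
  P _ α := ∀ k, SSet.stdSimplex.asOrderHom α k ≠ i
  closed _ _ φ α h := fun k => h _

/-- Transport of trivial cofibrancy from the inclusion of `B` into `Δ[n]` to the
inclusion of `A ∩ dᵢ` into the face `dᵢ` inside `Δ[n+1]`. -/
lemma face_transport (M : ModelStructure SSet) (B : Sub n) (A : Sub (n+1)) (i : Fin (n+2))
    (hiff : ∀ ⦃m : SimplexCategoryᵒᵖ⦄ (α : Δ[n+1].obj m),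
      (A.inter (faceSub (n+1) i)).P α ↔ (Sub.pull i B).P α)
    (hB : TCof M B.ι) :
    TCof M (Sub.homOfLe (Sub.inter_le_right A (faceSub (n+1) i))) := by
  have hface : ∀ ⦃m : SimplexCategoryᵒᵖ⦄ (α : Δ[n+1].obj m),
      (faceSub (n+1) i).P α ↔ (Sub.pull i (subTop n)).P α :=
    fun m α => ⟨fun h => ⟨h, trivial⟩, fun h => h.1⟩
  refine tcof_of_arrow_iso M
    (Sub.isoOfEq _ _ hiff ≪≫ pullIso i B)
    (Sub.isoOfEq _ _ hface ≪≫ pullIso i (subTop n) ≪≫ topIso n) ?_ hB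
  apply SSet.hom_ext; intro m; ext x
  rfl

/-- The attachment of the face `dᵢ` along a trivially-cofibrant inclusion. -/
lemma attach_face (M : ModelStructure SSet) (B : Sub n) (A : Sub (n+1)) (i : Fin (n+2))
    (hiff : ∀ ⦃m : SimplexCategoryᵒᵖ⦄ (α : Δ[n+1].obj m),
      (A.inter (faceSub (n+1) i)).P α ↔ (Sub.pull i B).P α)
    (hB : TCof M B.ι) :
    TCof M (Sub.homOfLe (Sub.le_union_left A (faceSub (n+1) i))) :=
  attach_tcof M A (faceSub (n+1) i) (face_transport M B A i hiff hB)

end Pull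
end Q2S


namespace Q2S

section Numeric

lemma succAbove_natval {n : ℕ} (i : Fin (n+1)) (u : Fin n) :
    ((i.succAbove u : Fin (n+1)) : ℕ) = if (u:ℕ) < (i:ℕ) then (u:ℕ) else (u:ℕ)+1 := by
  rcases Nat.lt_or_ge (u:ℕ) i with h|h
  · rw [Fin.succAbove_of_castSucc_lt _ _ (by simpa [Fin.lt_iff_val_lt_val] using h)]
    simp [h]
  · rw [Fin.succAbove_of_le_castSucc _ _ (by simpa [Fin.le_iff_val_le_val] using h)]
    simp [Nat.not_lt.2 h]

lemma mem_pair_iff {α : Type*} (s x y : α) : s ∈ ({x, y} : Set α) ↔ s = x ∨ s = y := by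
  simp [Set.mem_insert_iff]

lemma brokenSet_pair {n : ℕ} (x y : Fin (n+1)) (h1 : (x:ℕ)+1 < (y:ℕ))
    (h2 : 0 < (x:ℕ) ∨ (y:ℕ) < n) : BrokenSet {x, y} := by
  have hyn : (y:ℕ) ≤ n := Nat.lt_succ_iff.1 y.isLt
  rcases h2 with h2 | h2
  · -- pattern with b, d ∈ S
    refine ⟨⟨0, by omega⟩, x, ⟨(x:ℕ)+1, by omega⟩, y, ?_, ?_, ?_, Or.inr ⟨?_, ?_, ?_, ?_⟩⟩
    · exact Fin.lt_iff_val_lt_val.2 (by dsimp only; omega)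
    · exact Fin.lt_iff_val_lt_val.2 (by dsimp only; omega)
    · exact Fin.lt_iff_val_lt_val.2 (by dsimp only; omega)
    · simp [mem_pair_iff]
    · simp [mem_pair_iff]
    · simp [mem_pair_iff, Fin.ext_iff]; omega
    · simp [mem_pair_iff, Fin.ext_iff]; omega
  · -- pattern with a, c ∈ S
    refine ⟨x, ⟨(x:ℕ)+1, by omega⟩, y, ⟨(y:ℕ)+1, by omega⟩, ?_, ?_, ?_, Or.inl ⟨?_, ?_, ?_, ?_⟩⟩
    · exact Fin.lt_iff_val_lt_val.2 (by dsimp only; omega)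
    · exact Fin.lt_iff_val_lt_val.2 (by dsimp only; omega)
    · exact Fin.lt_iff_val_lt_val.2 (by dsimp only; omega)
    · simp [mem_pair_iff]
    · simp [mem_pair_iff]
    · simp [mem_pair_iff, Fin.ext_iff]; omega
    · simp [mem_pair_iff, Fin.ext_iff]; omega

lemma pair_cond_of_broken {n : ℕ} {x y : Fin (n+1)} (hxy : (x:ℕ) < (y:ℕ))
    (h : BrokenSet {x, y}) : (x:ℕ)+1 < (y:ℕ) ∧ (0 < (x:ℕ) ∨ (y:ℕ) < n) := by
  obtain ⟨a, b, c, d, hab, hbc, hcd, hpat⟩ := h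
  rw [Fin.lt_iff_val_lt_val] at hab hbc hcd
  have hd : (d:ℕ) ≤ n := Nat.lt_succ_iff.1 d.isLt
  rcases hpat with ⟨ha, hc, hb, hd'⟩ | ⟨hb, hd', ha, hc⟩
  · rw [mem_pair_iff] at ha hc
    rw [mem_pair_iff] at hb hd'
    push_neg at hb hd'
    rcases ha with ha | ha <;> rcases hc with hc | hc <;>
      simp only [Fin.ext_iff] at ha hc hb hd' <;> omega
  · rw [mem_pair_iff] at hb hd'
    rw [mem_pair_iff] at ha hc
    push_neg at ha hc
    rcases hb with hb | hb <;> rcases hd' with hd' | hd' <;>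
      simp only [Fin.ext_iff] at ha hc hb hd' <;> omega

lemma preimage_pair {n : ℕ} (k x y : Fin (n+2)) (hx : x ≠ k) (hy : y ≠ k) :
    ∃ x' y' : Fin (n+1), k.succAbove x' = x ∧ k.succAbove y' = y ∧
      (k.succAbove ⁻¹' {x, y} : Set (Fin (n+1))) = {x', y'} := by
  obtain ⟨x', hx'⟩ := Fin.exists_succAbove_eq hx
  obtain ⟨y', hy'⟩ := Fin.exists_succAbove_eq hy
  refine ⟨x', y', hx', hy', ?_⟩
  ext v
  simp only [Set.mem_preimage, mem_pair_iff]
  constructor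
  · rintro (h | h)
    · exact Or.inl (Fin.succAbove_right_injective (by rw [hx', h]))
    · exact Or.inr (Fin.succAbove_right_injective (by rw [hy', h]))
  · rintro (rfl | rfl)
    · exact Or.inl hx'
    · exact Or.inr hy'

lemma broken_preimage_pair {n : ℕ} (k x y : Fin (n+2)) (hxy : (x:ℕ) < (y:ℕ))
    (cond : ((k:ℕ) < x ∧ (x:ℕ)+1 < y ∧ ¬((x:ℕ) = 1 ∧ (y:ℕ) = n+1)) ∨
            ((x:ℕ) < k ∧ (k:ℕ) < y ∧ (x:ℕ)+2 < y ∧ ¬((x:ℕ) = 0 ∧ (y:ℕ) = n+1)) ∨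
            ((y:ℕ) < k ∧ (x:ℕ)+1 < y ∧ ¬((x:ℕ) = 0 ∧ (y:ℕ)+1 = n+1))) :
    BrokenSet (k.succAbove ⁻¹' ({x, y} : Set (Fin (n+2)))) := by
  have hx : x ≠ k := by intro h; rw [Fin.ext_iff] at h; omega
  have hy : y ≠ k := by intro h; rw [Fin.ext_iff] at h; omega
  obtain ⟨x', y', hx', hy', hpre⟩ := preimage_pair k x y hx hy
  rw [hpre]
  have ex : (x:ℕ) = if (x':ℕ) < (k:ℕ) then (x':ℕ) else (x':ℕ)+1 := by
    rw [← hx']; exact succAbove_natval k x'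
  have ey : (y:ℕ) = if (y':ℕ) < (k:ℕ) then (y':ℕ) else (y':ℕ)+1 := by
    rw [← hy']; exact succAbove_natval k y'
  apply brokenSet_pair
  · split_ifs at ex ey <;> omega
  · split_ifs at ex ey <;> omega

lemma broken_preimage_pattern {n : ℕ} (k : Fin (n+2)) (S : Set (Fin (n+2)))
    (a b c d : Fin (n+2)) (hab : a < b) (hbc : b < c) (hcd : c < d)
    (hpat : (a ∈ S ∧ c ∈ S ∧ b ∉ S ∧ d ∉ S) ∨ (b ∈ S ∧ d ∈ S ∧ a ∉ S ∧ c ∉ S))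
    (hka : a ≠ k) (hkb : b ≠ k) (hkc : c ≠ k) (hkd : d ≠ k) :
    BrokenSet (k.succAbove ⁻¹' S) := by
  obtain ⟨a', ha'⟩ := Fin.exists_succAbove_eq hka
  obtain ⟨b', hb'⟩ := Fin.exists_succAbove_eq hkb
  obtain ⟨c', hc'⟩ := Fin.exists_succAbove_eq hkc
  obtain ⟨d', hd'⟩ := Fin.exists_succAbove_eq hkd
  have hmono := Fin.strictMono_succAbove k
  refine ⟨a', b', c', d', ?_, ?_, ?_, ?_⟩
  · rw [← hmono.lt_iff_lt, ha', hb']; exact hab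
  · rw [← hmono.lt_iff_lt, hb', hc']; exact hbc
  · rw [← hmono.lt_iff_lt, hc', hd']; exact hcd
  · simp only [Set.mem_preimage, ha', hb', hc', hd']
    exact hpat

end Numeric

section HornLemmas

universe u

variable (M : ModelStructure SSet.{u})

def hornSub (n : ℕ) (S : Set (Fin (n + 1))) : Sub n :=
  ⟨fun _ α => ∃ i ∈ S, ∀ k, SSet.stdSimplex.asOrderHom α k ≠ i, genHorn_closed n S⟩

lemma hornSub_ι (n : ℕ) (S : Set (Fin (n + 1))) : (hornSub n S).ι = genHornIncl n S := rfl

def spineSub (n : ℕ) (T : Triangulation n) : Sub n :=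
  ⟨fun _ α => ∃ t ∈ T.tris, ∀ k, (SSet.stdSimplex.asOrderHom α k : ℕ) = t.1 ∨
      (SSet.stdSimplex.asOrderHom α k : ℕ) = t.2.1 ∨ (SSet.stdSimplex.asOrderHom α k : ℕ) = t.2.2,
   spine_closed T⟩

lemma spineSub_ι (n : ℕ) (T : Triangulation n) :
    (spineSub n T).ι = twoSegalSpineIncl n T := rfl

lemma cof_of_mono (hcof : M.Cof = MorphismProperty.monomorphisms SSet.{u})
    {X Y : SSet.{u}} (f : X ⟶ Y) [Mono f] : M.Cof f := by
  rw [hcof]; exact (inferInstance : Mono f)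

instance genHornIncl_mono (n : ℕ) (S : Set (Fin (n+1))) : Mono (genHornIncl n S) :=
  Sub.mono_ι (hornSub n S)

instance twoSegalSpineIncl_mono (n : ℕ) (T : Triangulation n) : Mono (twoSegalSpineIncl n T) :=
  Sub.mono_ι (spineSub n T)

/-- Spine inclusions (in dimension ≥ 2) are trivial cofibrations. -/
lemma tcof_spine (hcof : M.Cof = MorphismProperty.monomorphisms SSet.{u})
    (hspine : ∀ (n : ℕ), 3 ≤ n → ∀ T : Triangulation n, M.W (twoSegalSpineIncl n T))
    (m : ℕ) (hm : 2 ≤ m) (T : Triangulation m) : TCof M (twoSegalSpineIncl m T) := by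
  rcases Nat.lt_or_ge m 3 with h3 | h3
  · -- m = 2 : the inclusion is an isomorphism
    have hm2 : m = 2 := by omega
    subst hm2
    obtain ⟨t, ht⟩ := Finset.card_eq_one.1 (by simpa using T.card_eq)
    have htm : t ∈ T.tris := by rw [ht]; exact Finset.mem_singleton_self t
    have h1 := T.lt₁ t htm
    have h2 := T.lt₂ t htm
    have h3 := T.le_n t htm
    have hpred : ∀ ⦃mm : SimplexCategoryᵒᵖ⦄ (α : Δ[2].obj mm), (spineSub 2 T).P α := by
      intro mm α
      refine ⟨t, htm, fun k => ?_⟩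
      have := (SSet.stdSimplex.asOrderHom α k).isLt
      omega
    haveI : IsIso (twoSegalSpineIncl 2 T) := by
      refine ⟨{ app := fun mm => TypeCat.ofHom fun α => ⟨α, hpred α⟩, naturality := fun _ _ _ => rfl }, ?_, ?_⟩
      · apply SSet.hom_ext; intro mm; ext x; exact Subtype.ext rfl
      · apply SSet.hom_ext; intro mm; ext x; rfl
    exact tcof_of_iso M _
  · exact ⟨by rw [← spineSub_ι]; exact @cof_of_mono M hcof _ _ _ (Sub.mono_ι (spineSub m T)), hspine m h3 T⟩

lemma horn_mono_le (n : ℕ) (S S' : Set (Fin (n+1))) (h : S ⊆ S') :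
    (hornSub n S).Le (hornSub n S') := by
  rintro m α ⟨i, hi, hmiss⟩
  exact ⟨i, h hi, hmiss⟩

/-- Attaching the face `d_k` to a generalized horn along a lower-dimensional horn. -/
lemma hornAttach (hcof : M.Cof = MorphismProperty.monomorphisms SSet.{u})
    {n : ℕ} (k : Fin (n+2)) (S : Set (Fin (n+2))) (hk : k ∉ S)
    (hlow : TCof M (genHornIncl n (k.succAbove ⁻¹' S))) :
    TCof M (Sub.homOfLe (horn_mono_le (n+1) S (insert k S) (Set.subset_insert k S))) := by
  set A := hornSub (n+1) S with hA
  set F := faceSub (n+1) k with hF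
  have hiff : ∀ ⦃m : SimplexCategoryᵒᵖ⦄ (α : Δ[n+1].obj m),
      (A.inter F).P α ↔ (Sub.pull k (hornSub n (k.succAbove ⁻¹' S))).P α := by
    intro m α
    constructor
    · rintro ⟨⟨j, hjS, hjm⟩, hkm⟩
      have hjk : j ≠ k := fun hh => hk (hh ▸ hjS)
      obtain ⟨u, hu⟩ := Fin.exists_succAbove_eq hjk
      refine ⟨hkm, u, by rw [Set.mem_preimage, hu]; exact hjS, fun r hr => ?_⟩
      apply hjm r
      rw [vert_eq_succAbove α k hkm r, hr, hu]
    · rintro ⟨hkm, u, hu, hum⟩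
      refine ⟨⟨k.succAbove u, hu, fun r hr => hum r ?_⟩, hkm⟩
      apply Fin.succAbove_right_injective
      rw [← hr, ← vert_eq_succAbove α k hkm r]
  have step := attach_face M (hornSub n (k.succAbove ⁻¹' S)) A k hiff
    (by rw [hornSub_ι]; exact hlow)
  have hun : ∀ ⦃m : SimplexCategoryᵒᵖ⦄ (α : Δ[n+1].obj m),
      (hornSub (n+1) (insert k S)).P α ↔ (A.union F).P α := by
    intro m α
    constructor
    · rintro ⟨j, hj, hm⟩
      rcases Set.mem_insert_iff.1 hj with rfl | hj
      · exact Or.inr hm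
      · exact Or.inl ⟨j, hj, hm⟩
    · rintro (⟨j, hj, hm⟩ | hm)
      · exact ⟨j, Set.mem_insert_iff.2 (Or.inr hj), hm⟩
      · exact ⟨k, Set.mem_insert_iff.2 (Or.inl rfl), hm⟩
  refine tcof_of_arrow_iso M (Iso.refl _)
    (Sub.isoOfEq (hornSub (n+1) (insert k S)) (A.union F) hun) ?_ step
  apply SSet.hom_ext; intro m; ext x
  rfl

/-- enlarging a horn whose inclusion-of-subhorn is a trivial cofibration -/
lemma tcof_horn_of_le (hcof : M.Cof = MorphismProperty.monomorphisms SSet.{u})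
    {n : ℕ} {S S' : Set (Fin (n+1))} (hss : S ⊆ S')
    (h1 : TCof M (Sub.homOfLe (horn_mono_le n S S' hss)))
    (h2 : TCof M (genHornIncl n S)) : TCof M (genHornIncl n S') := by
  refine tcof_cancel_right M h1
    (show M.W (Sub.homOfLe (horn_mono_le n S S' hss) ≫ genHornIncl n S') from h2.2)
    (cof_of_mono M hcof _)

/-- shrinking a horn whose inclusion-of-subhorn is a trivial cofibration -/
lemma tcof_horn_of_ge (hcof : M.Cof = MorphismProperty.monomorphisms SSet.{u})
    {n : ℕ} {S S' : Set (Fin (n+1))} (hss : S ⊆ S')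
    (h1 : TCof M (Sub.homOfLe (horn_mono_le n S S' hss)))
    (h2 : TCof M (genHornIncl n S')) : TCof M (genHornIncl n S) := by
  refine ⟨cof_of_mono M hcof _, ?_⟩
  exact (show M.W (Sub.homOfLe (horn_mono_le n S S' hss) ≫ genHornIncl n S') from
    w_comp_of_w M h1.2 h2.2)

lemma horn_hop (hcof : M.Cof = MorphismProperty.monomorphisms SSet.{u})
    {n : ℕ} {S1 S2 : Set (Fin (n+2))} (k1 k2 : Fin (n+2))
    (hk1 : k1 ∉ S1) (hk2 : k2 ∉ S2) (heq : insert k1 S1 = insert k2 S2)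
    (hlow1 : TCof M (genHornIncl n (k1.succAbove ⁻¹' S1)))
    (hlow2 : TCof M (genHornIncl n (k2.succAbove ⁻¹' S2)))
    (h1 : TCof M (genHornIncl (n+1) S1)) : TCof M (genHornIncl (n+1) S2) := by
  have h3 : TCof M (genHornIncl (n+1) (insert k1 S1)) :=
    tcof_horn_of_le M hcof (Set.subset_insert k1 S1)
      (hornAttach M hcof k1 S1 hk1 hlow1) h1
  rw [heq] at h3
  exact tcof_horn_of_ge M hcof (Set.subset_insert k2 S2)
    (hornAttach M hcof k2 S2 hk2 hlow2) h3

end HornLemmas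

end Q2S

namespace Q2S
section PairBaseTris

/-- injectivity of fans -/
lemma fan_inj (a : ℕ) : Function.Injective (fun k : ℕ => (a, k, k+1)) := by
  intro x y h
  simpa [Prod.ext_iff] using h

/-- The triangulation `T` of the `(n+3)`-gon with ears at `0` and `2`. -/
def triT (n : ℕ) (hn : 2 ≤ n) : Triangulation (n+2) where
  tris := insert (0,1,n+2) (insert (1,2,3) ((Finset.Ico 3 (n+2)).image fun k => (1,k,k+1)))
  card_eq := by
    have h2 : ((1:ℕ),2,3) ∉ (Finset.Ico 3 (n+2)).image (fun k => ((1:ℕ),k,k+1)) := by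
      rw [Finset.mem_image]
      rintro ⟨k, hk, he⟩
      rw [Finset.mem_Ico] at hk
      simp only [Prod.mk.injEq] at he
      omega
    have h1 : ((0:ℕ),1,n+2) ∉ insert ((1:ℕ),2,3)
        ((Finset.Ico 3 (n+2)).image (fun k => ((1:ℕ),k,k+1))) := by
      rw [Finset.mem_insert, Finset.mem_image]
      rintro (he | ⟨k, hk, he⟩) <;> simp only [Prod.mk.injEq] at he <;> omega
    rw [Finset.card_insert_of_notMem h1, Finset.card_insert_of_notMem h2,
      Finset.card_image_of_injective _ (fan_inj 1), Nat.card_Ico]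
    omega
  lt₁ := by
    intro t ht
    rw [Finset.mem_insert, Finset.mem_insert, Finset.mem_image] at ht
    rcases ht with rfl | rfl | ⟨k, hk, rfl⟩
    · dsimp only; omega
    · dsimp only; omega
    · rw [Finset.mem_Ico] at hk; dsimp only; omega
  lt₂ := by
    intro t ht
    rw [Finset.mem_insert, Finset.mem_insert, Finset.mem_image] at ht
    rcases ht with rfl | rfl | ⟨k, hk, rfl⟩
    · dsimp only; omega
    · dsimp only; omega
    · rw [Finset.mem_Ico] at hk; dsimp only; omega
  le_n := by
    intro t ht
    rw [Finset.mem_insert, Finset.mem_insert, Finset.mem_image] at ht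
    rcases ht with rfl | rfl | ⟨k, hk, rfl⟩
    · dsimp only; omega
    · dsimp only; omega
    · rw [Finset.mem_Ico] at hk; dsimp only; omega
  noncrossing := by
    have hchar : ∀ p q : ℕ, IsChord (insert (0,1,n+2) (insert (1,2,3)
        ((Finset.Ico 3 (n+2)).image fun k => (1,k,k+1)))) p q →
        p < q ∧ q ≤ n+2 ∧ (p = 1 ∨ q = p+1 ∨ (p = 0 ∧ (q = 1 ∨ q = n+2))) := by
      rintro p q ⟨t, ht, hpq⟩
      rw [Finset.mem_insert, Finset.mem_insert, Finset.mem_image] at ht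
      rcases ht with rfl | rfl | ⟨k, hk, rfl⟩ <;>
        simp only [Finset.mem_Ico] at * <;>
        rcases hpq with h | h | h <;> simp only [Prod.mk.injEq] at h <;> omega
    intro p q r s h1 h2 hc
    obtain ⟨hpq, hq, hp⟩ := hchar p q h1
    obtain ⟨hrs, hs, hr⟩ := hchar r s h2
    omega

/-- The fan triangulation from `0` of the `(m+2)`-gon. -/
def triFan (m : ℕ) : Triangulation (m+1) where
  tris := (Finset.Ico 1 (m+1)).image fun k => (0,k,k+1)
  card_eq := by
    rw [Finset.card_image_of_injective _ (fan_inj 0), Nat.card_Ico]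
  lt₁ := by
    rintro t ht
    rw [Finset.mem_image] at ht
    obtain ⟨k, hk, rfl⟩ := ht
    rw [Finset.mem_Ico] at hk; dsimp only; omega
  lt₂ := by
    rintro t ht
    rw [Finset.mem_image] at ht
    obtain ⟨k, hk, rfl⟩ := ht
    rw [Finset.mem_Ico] at hk; dsimp only; omega
  le_n := by
    rintro t ht
    rw [Finset.mem_image] at ht
    obtain ⟨k, hk, rfl⟩ := ht
    rw [Finset.mem_Ico] at hk; dsimp only; omega
  noncrossing := by
    have hchar : ∀ p q : ℕ, IsChord ((Finset.Ico 1 (m+1)).image fun k => (0,k,k+1)) p q →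
        p < q ∧ (p = 0 ∨ q = p+1) := by
      rintro p q ⟨t, ht, hpq⟩
      rw [Finset.mem_image] at ht
      obtain ⟨k, hk, rfl⟩ := ht
      rw [Finset.mem_Ico] at hk
      rcases hpq with h | h | h <;> simp only [Prod.mk.injEq] at h <;> omega
    intro p q r s h1 h2 hc
    obtain ⟨hpq, hp⟩ := hchar p q h1
    obtain ⟨hrs, hr⟩ := hchar r s h2
    omega

/-- The triangulation `T₂` of the `(n+2)`-gon (link of the ear at `2` removed). -/
def triT2 (n : ℕ) (hn : 2 ≤ n) : Triangulation (n+1) where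
  tris := insert (0,1,n+1) ((Finset.Ico 2 (n+1)).image fun k => (1,k,k+1))
  card_eq := by
    have h1 : ((0:ℕ),1,n+1) ∉ (Finset.Ico 2 (n+1)).image (fun k => ((1:ℕ),k,k+1)) := by
      rw [Finset.mem_image]
      rintro ⟨k, hk, he⟩
      rw [Finset.mem_Ico] at hk
      simp only [Prod.mk.injEq] at he
      omega
    rw [Finset.card_insert_of_notMem h1,
      Finset.card_image_of_injective _ (fan_inj 1), Nat.card_Ico]
    omega
  lt₁ := by
    intro t ht
    rw [Finset.mem_insert, Finset.mem_image] at ht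
    rcases ht with rfl | ⟨k, hk, rfl⟩
    · dsimp only; omega
    · rw [Finset.mem_Ico] at hk; dsimp only; omega
  lt₂ := by
    intro t ht
    rw [Finset.mem_insert, Finset.mem_image] at ht
    rcases ht with rfl | ⟨k, hk, rfl⟩
    · dsimp only; omega
    · rw [Finset.mem_Ico] at hk; dsimp only; omega
  le_n := by
    intro t ht
    rw [Finset.mem_insert, Finset.mem_image] at ht
    rcases ht with rfl | ⟨k, hk, rfl⟩
    · dsimp only; omega
    · rw [Finset.mem_Ico] at hk; dsimp only; omega
  noncrossing := by
    have hchar : ∀ p q : ℕ, IsChord (insert (0,1,n+1)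
        ((Finset.Ico 2 (n+1)).image fun k => (1,k,k+1))) p q →
        p < q ∧ q ≤ n+1 ∧ (p = 1 ∨ q = p+1 ∨ (p = 0 ∧ (q = 1 ∨ q = n+1))) := by
      rintro p q ⟨t, ht, hpq⟩
      rw [Finset.mem_insert, Finset.mem_image] at ht
      rcases ht with rfl | ⟨k, hk, rfl⟩ <;>
        simp only [Finset.mem_Ico] at * <;>
        rcases hpq with h | h | h <;> simp only [Prod.mk.injEq] at h <;> omega
    intro p q r s h1 h2 hc
    obtain ⟨hpq, hq, hp⟩ := hchar p q h1
    obtain ⟨hrs, hs, hr⟩ := hchar r s h2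
    omega

end PairBaseTris
end Q2S

namespace Q2S
section PairBaseHelpers

universe u

lemma vert_val_cases {n : ℕ} {mm : SimplexCategoryᵒᵖ} (α : (Δ[n+1] : SSet.{u}).obj mm)
    (i : Fin (n+2)) (h : ∀ k, SSet.stdSimplex.asOrderHom α k ≠ i) (k) :
    ((SSet.stdSimplex.asOrderHom (fdown α i) k : ℕ) < (i:ℕ) ∧
      (SSet.stdSimplex.asOrderHom α k : ℕ) = (SSet.stdSimplex.asOrderHom (fdown α i) k : ℕ)) ∨
    ((i:ℕ) ≤ (SSet.stdSimplex.asOrderHom (fdown α i) k : ℕ) ∧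
      (SSet.stdSimplex.asOrderHom α k : ℕ) = (SSet.stdSimplex.asOrderHom (fdown α i) k : ℕ) + 1) := by
  have hv : (SSet.stdSimplex.asOrderHom α k : ℕ) = ((i.succAbove (SSet.stdSimplex.asOrderHom (fdown α i) k)) : ℕ) := by
    rw [vert_eq_succAbove α i h k]
  rw [succAbove_natval] at hv
  rcases Nat.lt_or_ge (SSet.stdSimplex.asOrderHom (fdown α i) k : ℕ) (i:ℕ) with hh | hh
  · rw [if_pos hh] at hv
    exact Or.inl ⟨hh, hv⟩
  · rw [if_neg (Nat.not_lt.2 hh)] at hv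
    exact Or.inr ⟨hh, hv⟩

lemma mem_triT_left (n : ℕ) (hn : 2 ≤ n) : ((0:ℕ),1,n+2) ∈ (triT n hn).tris := by
  simp [triT, Finset.mem_insert]

lemma mem_triT_mid (n : ℕ) (hn : 2 ≤ n) : ((1:ℕ),2,3) ∈ (triT n hn).tris := by
  simp [triT, Finset.mem_insert]

lemma mem_triT_fan (n : ℕ) (hn : 2 ≤ n) (k : ℕ) (h3 : 3 ≤ k) (hk : k < n+2) :
    ((1:ℕ),k,k+1) ∈ (triT n hn).tris := by
  simp only [triT, Finset.mem_insert, Finset.mem_image]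
  exact Or.inr (Or.inr ⟨k, Finset.mem_Ico.2 ⟨h3, hk⟩, rfl⟩)

lemma mem_triFan (m : ℕ) (k : ℕ) (h1 : 1 ≤ k) (hk : k < m+1) :
    ((0:ℕ),k,k+1) ∈ (triFan m).tris := by
  simp only [triFan, Finset.mem_image]
  exact ⟨k, Finset.mem_Ico.2 ⟨h1, hk⟩, rfl⟩

lemma mem_triT2_left (n : ℕ) (hn : 2 ≤ n) : ((0:ℕ),1,n+1) ∈ (triT2 n hn).tris := by
  simp [triT2, Finset.mem_insert]

lemma mem_triT2_fan (n : ℕ) (hn : 2 ≤ n) (k : ℕ) (h2 : 2 ≤ k) (hk : k < n+1) :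
    ((1:ℕ),k,k+1) ∈ (triT2 n hn).tris := by
  simp only [triT2, Finset.mem_insert, Finset.mem_image]
  exact Or.inr ⟨k, Finset.mem_Ico.2 ⟨h2, hk⟩, rfl⟩

lemma unpack_triT {n : ℕ} {hn : 2 ≤ n} {t : ℕ × ℕ × ℕ} (ht : t ∈ (triT n hn).tris) :
    t = (0,1,n+2) ∨ t = (1,2,3) ∨ ∃ k, 3 ≤ k ∧ k < n+2 ∧ t = (1,k,k+1) := by
  simp only [triT, Finset.mem_insert, Finset.mem_image] at ht
  rcases ht with rfl | rfl | ⟨k, hk, rfl⟩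
  · exact Or.inl rfl
  · exact Or.inr (Or.inl rfl)
  · rw [Finset.mem_Ico] at hk
    exact Or.inr (Or.inr ⟨k, hk.1, hk.2, rfl⟩)

lemma unpack_triFan {m : ℕ} {t : ℕ × ℕ × ℕ} (ht : t ∈ (triFan m).tris) :
    ∃ k, 1 ≤ k ∧ k < m+1 ∧ t = (0,k,k+1) := by
  simp only [triFan, Finset.mem_image] at ht
  obtain ⟨k, hk, rfl⟩ := ht
  rw [Finset.mem_Ico] at hk
  exact ⟨k, hk.1, hk.2, rfl⟩

lemma unpack_triT2 {n : ℕ} {hn : 2 ≤ n} {t : ℕ × ℕ × ℕ} (ht : t ∈ (triT2 n hn).tris) :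
    t = (0,1,n+1) ∨ ∃ k, 2 ≤ k ∧ k < n+1 ∧ t = (1,k,k+1) := by
  simp only [triT2, Finset.mem_insert, Finset.mem_image] at ht
  rcases ht with rfl | ⟨k, hk, rfl⟩
  · exact Or.inl rfl
  · rw [Finset.mem_Ico] at hk
    exact Or.inr ⟨k, hk.1, hk.2, rfl⟩

variable (M : ModelStructure SSet.{u})

lemma tcof_union_ι (hcof : M.Cof = MorphismProperty.monomorphisms SSet.{u})
    {n : ℕ} (A B : Sub n)
    (hstep : TCof M (Sub.homOfLe (Sub.le_union_left A B))) (hA : TCof M A.ι) :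
    TCof M ((A.union B).ι) :=
  tcof_cancel_right M hstep
    (show M.W (Sub.homOfLe (Sub.le_union_left A B) ≫ (A.union B).ι) from hA.2)
    (cof_of_mono M hcof _)

end PairBaseHelpers
end Q2S

namespace Q2S
section MainAssembly

universe u

variable (M : ModelStructure SSet.{u})

/-- The base pair horn `Λ^{0,2}[n+2]`, proved via explicit triangulations. -/
lemma pairBase (hcof : M.Cof = MorphismProperty.monomorphisms SSet.{u})
    (hsp : ∀ m, 2 ≤ m → ∀ T : Triangulation m, TCof M (twoSegalSpineIncl m T))
    {n : ℕ} (hn : 2 ≤ n) :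
    TCof M (genHornIncl (n+2)
      ({⟨0, by omega⟩, ⟨2, by omega⟩} : Set (Fin (n+3)))) := by
  obtain ⟨m, rfl⟩ : ∃ m, n = m + 2 := ⟨n - 2, by omega⟩
  have hn2 : (2:ℕ) ≤ m + 2 := by omega
  set f0 : Fin (m+5) := ⟨0, by omega⟩ with hf0def
  set f2 : Fin (m+5) := ⟨2, by omega⟩ with hf2def
  set i0 : Fin (m+4) := ⟨0, by omega⟩ with hi0def
  set A : Sub (m+4) := spineSub (m+4) (triT (m+2) hn2) with hAdef
  set F0 : Sub (m+4) := faceSub (m+4) f0 with hF0def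
  set F2 : Sub (m+4) := faceSub (m+4) f2 with hF2def
  set G : Sub (m+3) := (spineSub (m+3) (triT2 (m+2) hn2)).union (faceSub (m+3) i0) with hGdef
  -- Step 1: attach the face d₀ to the spine, along the fan spine of Δ[m+3]
  have hiff1 : ∀ ⦃mm : SimplexCategoryᵒᵖ⦄ (α : Δ[m+4].obj mm),
      (A.inter F0).P α ↔ (Sub.pull f0 (spineSub (m+3) (triFan (m+2)))).P α := by
    intro mm α
    constructor
    · rintro ⟨⟨t, ht, hvert⟩, hmiss⟩
      refine ⟨hmiss, ?_⟩
      have hvv : ∀ r, (SSet.stdSimplex.asOrderHom α r : ℕ) = (SSet.stdSimplex.asOrderHom (fdown α f0) r : ℕ) + 1 := by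
        intro r
        rcases vert_val_cases α f0 hmiss r with ⟨h1, h2⟩ | ⟨h1, h2⟩
        · have h0 : (f0:ℕ) = 0 := rfl
          omega
        · exact h2
      rcases unpack_triT ht with rfl | rfl | ⟨k, h3, hk, rfl⟩
      · refine ⟨(0, m+2, m+2+1), mem_triFan (m+2) (m+2) (by omega) (by omega), fun r => ?_⟩
        have hv3 : (SSet.stdSimplex.asOrderHom α r : ℕ) = 0 ∨ (SSet.stdSimplex.asOrderHom α r : ℕ) = 1 ∨
            (SSet.stdSimplex.asOrderHom α r : ℕ) = m+4 := hvert r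
        have h4 := hvv r
        show (SSet.stdSimplex.asOrderHom (fdown α f0) r : ℕ) = 0 ∨
          (SSet.stdSimplex.asOrderHom (fdown α f0) r : ℕ) = m+2 ∨
          (SSet.stdSimplex.asOrderHom (fdown α f0) r : ℕ) = m+2+1
        omega
      · refine ⟨(0, 1, 1+1), mem_triFan (m+2) 1 (by omega) (by omega), fun r => ?_⟩
        have hv3 : (SSet.stdSimplex.asOrderHom α r : ℕ) = 1 ∨ (SSet.stdSimplex.asOrderHom α r : ℕ) = 2 ∨
            (SSet.stdSimplex.asOrderHom α r : ℕ) = 3 := hvert r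
        have h4 := hvv r
        show (SSet.stdSimplex.asOrderHom (fdown α f0) r : ℕ) = 0 ∨
          (SSet.stdSimplex.asOrderHom (fdown α f0) r : ℕ) = 1 ∨
          (SSet.stdSimplex.asOrderHom (fdown α f0) r : ℕ) = 1+1
        omega
      · refine ⟨(0, k-1, (k-1)+1), mem_triFan (m+2) (k-1) (by omega) (by omega), fun r => ?_⟩
        have hv3 : (SSet.stdSimplex.asOrderHom α r : ℕ) = 1 ∨ (SSet.stdSimplex.asOrderHom α r : ℕ) = k ∨
            (SSet.stdSimplex.asOrderHom α r : ℕ) = k+1 := hvert r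
        have h4 := hvv r
        show (SSet.stdSimplex.asOrderHom (fdown α f0) r : ℕ) = 0 ∨
          (SSet.stdSimplex.asOrderHom (fdown α f0) r : ℕ) = k-1 ∨
          (SSet.stdSimplex.asOrderHom (fdown α f0) r : ℕ) = (k-1)+1
        omega
    · rintro ⟨hmiss, t', ht', hvert'⟩
      have hvv : ∀ r, (SSet.stdSimplex.asOrderHom α r : ℕ) = (SSet.stdSimplex.asOrderHom (fdown α f0) r : ℕ) + 1 := by
        intro r
        rcases vert_val_cases α f0 hmiss r with ⟨h1, h2⟩ | ⟨h1, h2⟩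
        · have h0 : (f0:ℕ) = 0 := rfl
          omega
        · exact h2
      obtain ⟨k, hk1, hk2, rfl⟩ := unpack_triFan ht'
      rcases Nat.lt_or_ge k 2 with hk' | hk'
      · refine ⟨⟨(1,2,3), mem_triT_mid (m+2) hn2, fun r => ?_⟩, hmiss⟩
        have hv3 : (SSet.stdSimplex.asOrderHom (fdown α f0) r : ℕ) = 0 ∨
            (SSet.stdSimplex.asOrderHom (fdown α f0) r : ℕ) = k ∨
            (SSet.stdSimplex.asOrderHom (fdown α f0) r : ℕ) = k+1 := hvert' r
        have h4 := hvv r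
        show (SSet.stdSimplex.asOrderHom α r : ℕ) = 1 ∨ (SSet.stdSimplex.asOrderHom α r : ℕ) = 2 ∨
          (SSet.stdSimplex.asOrderHom α r : ℕ) = 3
        omega
      · refine ⟨⟨(1,k+1,(k+1)+1), mem_triT_fan (m+2) hn2 (k+1) (by omega) (by omega),
          fun r => ?_⟩, hmiss⟩
        have hv3 : (SSet.stdSimplex.asOrderHom (fdown α f0) r : ℕ) = 0 ∨
            (SSet.stdSimplex.asOrderHom (fdown α f0) r : ℕ) = k ∨
            (SSet.stdSimplex.asOrderHom (fdown α f0) r : ℕ) = k+1 := hvert' r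
        have h4 := hvv r
        show (SSet.stdSimplex.asOrderHom α r : ℕ) = 1 ∨ (SSet.stdSimplex.asOrderHom α r : ℕ) = k+1 ∨
          (SSet.stdSimplex.asOrderHom α r : ℕ) = (k+1)+1
        omega
  -- Step 3 (inner): attach the face d₀ of Δ[m+3] to the spine of T₂
  have hiff3 : ∀ ⦃mm : SimplexCategoryᵒᵖ⦄ (α : Δ[m+3].obj mm),
      ((spineSub (m+3) (triT2 (m+2) hn2)).inter (faceSub (m+3) i0)).P α ↔
      (Sub.pull i0 (spineSub (m+2) (triFan (m+1)))).P α := by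
    intro mm α
    constructor
    · rintro ⟨⟨t, ht, hvert⟩, hmiss⟩
      refine ⟨hmiss, ?_⟩
      have hvv : ∀ r, (SSet.stdSimplex.asOrderHom α r : ℕ) = (SSet.stdSimplex.asOrderHom (fdown α i0) r : ℕ) + 1 := by
        intro r
        rcases vert_val_cases α i0 hmiss r with ⟨h1, h2⟩ | ⟨h1, h2⟩
        · have h0 : (i0:ℕ) = 0 := rfl
          omega
        · exact h2
      rcases unpack_triT2 ht with rfl | ⟨k, h2', hk, rfl⟩
      · refine ⟨(0, m+1, m+1+1), mem_triFan (m+1) (m+1) (by omega) (by omega), fun r => ?_⟩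
        have hv3 : (SSet.stdSimplex.asOrderHom α r : ℕ) = 0 ∨ (SSet.stdSimplex.asOrderHom α r : ℕ) = 1 ∨
            (SSet.stdSimplex.asOrderHom α r : ℕ) = m+3 := hvert r
        have h4 := hvv r
        show (SSet.stdSimplex.asOrderHom (fdown α i0) r : ℕ) = 0 ∨
          (SSet.stdSimplex.asOrderHom (fdown α i0) r : ℕ) = m+1 ∨
          (SSet.stdSimplex.asOrderHom (fdown α i0) r : ℕ) = m+1+1
        omega
      · refine ⟨(0, k-1, (k-1)+1), mem_triFan (m+1) (k-1) (by omega) (by omega), fun r => ?_⟩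
        have hv3 : (SSet.stdSimplex.asOrderHom α r : ℕ) = 1 ∨ (SSet.stdSimplex.asOrderHom α r : ℕ) = k ∨
            (SSet.stdSimplex.asOrderHom α r : ℕ) = k+1 := hvert r
        have h4 := hvv r
        show (SSet.stdSimplex.asOrderHom (fdown α i0) r : ℕ) = 0 ∨
          (SSet.stdSimplex.asOrderHom (fdown α i0) r : ℕ) = k-1 ∨
          (SSet.stdSimplex.asOrderHom (fdown α i0) r : ℕ) = (k-1)+1
        omega
    · rintro ⟨hmiss, t', ht', hvert'⟩
      have hvv : ∀ r, (SSet.stdSimplex.asOrderHom α r : ℕ) = (SSet.stdSimplex.asOrderHom (fdown α i0) r : ℕ) + 1 := by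
        intro r
        rcases vert_val_cases α i0 hmiss r with ⟨h1, h2⟩ | ⟨h1, h2⟩
        · have h0 : (i0:ℕ) = 0 := rfl
          omega
        · exact h2
      obtain ⟨k, hk1, hk2, rfl⟩ := unpack_triFan ht'
      refine ⟨⟨(1,k+1,(k+1)+1), mem_triT2_fan (m+2) hn2 (k+1) (by omega) (by omega),
        fun r => ?_⟩, hmiss⟩
      have hv3 : (SSet.stdSimplex.asOrderHom (fdown α i0) r : ℕ) = 0 ∨
          (SSet.stdSimplex.asOrderHom (fdown α i0) r : ℕ) = k ∨
          (SSet.stdSimplex.asOrderHom (fdown α i0) r : ℕ) = k+1 := hvert' r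
      have h4 := hvv r
      show (SSet.stdSimplex.asOrderHom α r : ℕ) = 1 ∨ (SSet.stdSimplex.asOrderHom α r : ℕ) = k+1 ∨
        (SSet.stdSimplex.asOrderHom α r : ℕ) = (k+1)+1
      omega
  -- Step 4: attach the face d₂ along G = spine(T₂) ∪ d₀
  have hiff4 : ∀ ⦃mm : SimplexCategoryᵒᵖ⦄ (α : Δ[m+4].obj mm),
      ((A.union F0).inter F2).P α ↔ (Sub.pull f2 G).P α := by
    intro mm α
    have hi2 : (f2 : ℕ) = 2 := rfl
    constructor
    · rintro ⟨hu, hmiss2⟩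
      refine ⟨hmiss2, ?_⟩
      have hvc := fun r => vert_val_cases α f2 hmiss2 r
      have hne2 : ∀ r, (SSet.stdSimplex.asOrderHom α r : ℕ) ≠ 2 := by
        intro r he
        exact hmiss2 r (Fin.ext (by rw [he, hi2]))
      rcases hu with ⟨t, ht, hvert⟩ | hmiss0
      · refine Or.inl ?_
        rcases unpack_triT ht with rfl | rfl | ⟨k, h3, hk, rfl⟩
        · refine ⟨(0,1,m+3), mem_triT2_left (m+2) hn2, fun r => ?_⟩
          have hv3 : (SSet.stdSimplex.asOrderHom α r : ℕ) = 0 ∨ (SSet.stdSimplex.asOrderHom α r : ℕ) = 1 ∨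
              (SSet.stdSimplex.asOrderHom α r : ℕ) = m+4 := hvert r
          show (SSet.stdSimplex.asOrderHom (fdown α f2) r : ℕ) = 0 ∨
            (SSet.stdSimplex.asOrderHom (fdown α f2) r : ℕ) = 1 ∨
            (SSet.stdSimplex.asOrderHom (fdown α f2) r : ℕ) = m+3
          rcases hvc r with ⟨h1, h2⟩ | ⟨h1, h2⟩ <;> omega
        · refine ⟨(1,2,2+1), mem_triT2_fan (m+2) hn2 2 (by omega) (by omega), fun r => ?_⟩
          have hv3 : (SSet.stdSimplex.asOrderHom α r : ℕ) = 1 ∨ (SSet.stdSimplex.asOrderHom α r : ℕ) = 2 ∨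
              (SSet.stdSimplex.asOrderHom α r : ℕ) = 3 := hvert r
          have hn2' := hne2 r
          show (SSet.stdSimplex.asOrderHom (fdown α f2) r : ℕ) = 1 ∨
            (SSet.stdSimplex.asOrderHom (fdown α f2) r : ℕ) = 2 ∨
            (SSet.stdSimplex.asOrderHom (fdown α f2) r : ℕ) = 2+1
          rcases hvc r with ⟨h1, h2⟩ | ⟨h1, h2⟩ <;> omega
        · refine ⟨(1,k-1,(k-1)+1), mem_triT2_fan (m+2) hn2 (k-1) (by omega) (by omega),
            fun r => ?_⟩
          have hv3 : (SSet.stdSimplex.asOrderHom α r : ℕ) = 1 ∨ (SSet.stdSimplex.asOrderHom α r : ℕ) = k ∨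
              (SSet.stdSimplex.asOrderHom α r : ℕ) = k+1 := hvert r
          show (SSet.stdSimplex.asOrderHom (fdown α f2) r : ℕ) = 1 ∨
            (SSet.stdSimplex.asOrderHom (fdown α f2) r : ℕ) = k-1 ∨
            (SSet.stdSimplex.asOrderHom (fdown α f2) r : ℕ) = (k-1)+1
          rcases hvc r with ⟨h1, h2⟩ | ⟨h1, h2⟩ <;> omega
      · refine Or.inr (fun r he => ?_)
        have hbv : (SSet.stdSimplex.asOrderHom (fdown α f2) r : ℕ) = 0 := congrArg Fin.val he
        have hav : (SSet.stdSimplex.asOrderHom α r : ℕ) ≠ 0 := by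
          intro hh
          exact hmiss0 r (Fin.ext (by rw [hh]))
        rcases hvc r with ⟨h1, h2⟩ | ⟨h1, h2⟩ <;> omega
    · rintro ⟨hmiss2, hG⟩
      have hvc := fun r => vert_val_cases α f2 hmiss2 r
      refine ⟨?_, hmiss2⟩
      rcases hG with ⟨t', ht', hvert'⟩ | hmiss0
      · refine Or.inl ?_
        rcases unpack_triT2 ht' with rfl | ⟨k, h2', hk, rfl⟩
        · refine ⟨(0,1,m+4), mem_triT_left (m+2) hn2, fun r => ?_⟩
          have hv3 : (SSet.stdSimplex.asOrderHom (fdown α f2) r : ℕ) = 0 ∨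
              (SSet.stdSimplex.asOrderHom (fdown α f2) r : ℕ) = 1 ∨
              (SSet.stdSimplex.asOrderHom (fdown α f2) r : ℕ) = m+3 := hvert' r
          show (SSet.stdSimplex.asOrderHom α r : ℕ) = 0 ∨ (SSet.stdSimplex.asOrderHom α r : ℕ) = 1 ∨
            (SSet.stdSimplex.asOrderHom α r : ℕ) = m+4
          rcases hvc r with ⟨h1, h2⟩ | ⟨h1, h2⟩ <;> omega
        · refine ⟨(1,k+1,(k+1)+1), mem_triT_fan (m+2) hn2 (k+1) (by omega) (by omega),
            fun r => ?_⟩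
          have hv3 : (SSet.stdSimplex.asOrderHom (fdown α f2) r : ℕ) = 1 ∨
              (SSet.stdSimplex.asOrderHom (fdown α f2) r : ℕ) = k ∨
              (SSet.stdSimplex.asOrderHom (fdown α f2) r : ℕ) = k+1 := hvert' r
          show (SSet.stdSimplex.asOrderHom α r : ℕ) = 1 ∨ (SSet.stdSimplex.asOrderHom α r : ℕ) = k+1 ∨
            (SSet.stdSimplex.asOrderHom α r : ℕ) = (k+1)+1
          rcases hvc r with ⟨h1, h2⟩ | ⟨h1, h2⟩ <;> omega
      · refine Or.inr (fun r he => ?_)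
        have hav : (SSet.stdSimplex.asOrderHom α r : ℕ) = 0 := congrArg Fin.val he
        have hbv : (SSet.stdSimplex.asOrderHom (fdown α f2) r : ℕ) ≠ 0 := by
          intro hh
          exact hmiss0 r (Fin.ext (by rw [hh]))
        rcases hvc r with ⟨h1, h2⟩ | ⟨h1, h2⟩ <;> omega
  -- identification of the union with the horn
  have hiffH : ∀ ⦃mm : SimplexCategoryᵒᵖ⦄ (α : Δ[m+4].obj mm),
      (hornSub (m+4) ({f0, f2} : Set (Fin (m+5)))).P α ↔ ((A.union F0).union F2).P α := by
    intro mm α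
    constructor
    · rintro ⟨i, hi, hmiss⟩
      rcases (mem_pair_iff i f0 f2).1 hi with rfl | rfl
      · exact Or.inl (Or.inr hmiss)
      · exact Or.inr hmiss
    · rintro (hAF | hm2)
      · rcases hAF with ⟨t, ht, hvert⟩ | hm0
        · rcases unpack_triT ht with rfl | rfl | ⟨k, h3, hk, rfl⟩
          · refine ⟨f2, (mem_pair_iff f2 f0 f2).2 (Or.inr rfl), fun r he => ?_⟩
            have hav : (SSet.stdSimplex.asOrderHom α r : ℕ) = 2 := congrArg Fin.val he
            have hv3 : (SSet.stdSimplex.asOrderHom α r : ℕ) = 0 ∨ (SSet.stdSimplex.asOrderHom α r : ℕ) = 1 ∨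
                (SSet.stdSimplex.asOrderHom α r : ℕ) = m+4 := hvert r
            omega
          · refine ⟨f0, (mem_pair_iff f0 f0 f2).2 (Or.inl rfl), fun r he => ?_⟩
            have hav : (SSet.stdSimplex.asOrderHom α r : ℕ) = 0 := congrArg Fin.val he
            have hv3 : (SSet.stdSimplex.asOrderHom α r : ℕ) = 1 ∨ (SSet.stdSimplex.asOrderHom α r : ℕ) = 2 ∨
                (SSet.stdSimplex.asOrderHom α r : ℕ) = 3 := hvert r
            omega
          · refine ⟨f0, (mem_pair_iff f0 f0 f2).2 (Or.inl rfl), fun r he => ?_⟩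
            have hav : (SSet.stdSimplex.asOrderHom α r : ℕ) = 0 := congrArg Fin.val he
            have hv3 : (SSet.stdSimplex.asOrderHom α r : ℕ) = 1 ∨ (SSet.stdSimplex.asOrderHom α r : ℕ) = k ∨
                (SSet.stdSimplex.asOrderHom α r : ℕ) = k+1 := hvert r
            omega
        · exact ⟨f0, (mem_pair_iff f0 f0 f2).2 (Or.inl rfl), hm0⟩
      · exact ⟨f2, (mem_pair_iff f2 f0 f2).2 (Or.inr rfl), hm2⟩
  -- assemble
  have hspA : TCof M A.ι := hsp (m+4) (by omega) (triT (m+2) hn2)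
  have hB0 : TCof M (spineSub (m+3) (triFan (m+2))).ι := hsp (m+3) (by omega) (triFan (m+2))
  have step1 : TCof M (Sub.homOfLe (Sub.le_union_left A F0)) :=
    attach_face M (spineSub (m+3) (triFan (m+2))) A f0 hiff1 hB0
  have hB20 : TCof M (spineSub (m+2) (triFan (m+1))).ι := hsp (m+2) (by omega) (triFan (m+1))
  have step3a : TCof M (Sub.homOfLe (Sub.le_union_left (spineSub (m+3) (triT2 (m+2) hn2))
      (faceSub (m+3) i0))) :=
    attach_face M (spineSub (m+2) (triFan (m+1))) (spineSub (m+3) (triT2 (m+2) hn2)) i0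
      hiff3 hB20
  have hB2 : TCof M (spineSub (m+3) (triT2 (m+2) hn2)).ι := hsp (m+3) (by omega) _
  have hGι : TCof M G.ι := tcof_union_ι M hcof _ _ step3a hB2
  have step4 : TCof M (Sub.homOfLe (Sub.le_union_left (A.union F0) F2)) :=
    attach_face M G (A.union F0) f2 hiff4 hGι
  have hcomp := tcof_comp M step1 step4
  have hAle : A.Le (hornSub (m+4) ({f0, f2} : Set (Fin (m+5)))) := by
    intro mm α hα
    exact (hiffH α).2 (Or.inl (Or.inl hα))
  have hzig : TCof M (Sub.homOfLe hAle) := by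
    refine tcof_of_arrow_iso M (Iso.refl A.toSSet)
      (Sub.isoOfEq (hornSub (m+4) ({f0, f2} : Set (Fin (m+5)))) ((A.union F0).union F2) hiffH)
      ?_ hcomp
    apply SSet.hom_ext; intro mm; ext x
    rfl
  exact tcof_cancel_right M hzig
    (show M.W (Sub.homOfLe hAle ≫ genHornIncl (m+4) ({f0, f2} : Set (Fin (m+5)))) from hspA.2)
    (cof_of_mono M hcof _)

lemma pairMain (hcof : M.Cof = MorphismProperty.monomorphisms SSet.{u})
    (hsp : ∀ m, 2 ≤ m → ∀ T : Triangulation m, TCof M (twoSegalSpineIncl m T))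
    {n : ℕ} (hn : 2 ≤ n)
    (hmainlow : ∀ S : Set (Fin (n+2)), BrokenSet S → TCof M (genHornIncl (n+1) S))
    (i j : Fin (n+3)) (hij : (i:ℕ)+1 < (j:ℕ)) (hcond : 0 < (i:ℕ) ∨ (j:ℕ) < n+2) :
    TCof M (genHornIncl (n+2) ({i, j} : Set (Fin (n+3)))) := by
  have hjlt : (j:ℕ) < n + 3 := j.isLt
  have hlow : ∀ (k x y : Fin (n+3)), (x:ℕ) < (y:ℕ) →
      (((k:ℕ) < x ∧ (x:ℕ)+1 < y ∧ ¬((x:ℕ) = 1 ∧ (y:ℕ) = n+2)) ∨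
       ((x:ℕ) < k ∧ (k:ℕ) < y ∧ (x:ℕ)+2 < y ∧ ¬((x:ℕ) = 0 ∧ (y:ℕ) = n+2)) ∨
       ((y:ℕ) < k ∧ (x:ℕ)+1 < y ∧ ¬((x:ℕ) = 0 ∧ (y:ℕ)+1 = n+2))) →
      TCof M (genHornIncl (n+1) (k.succAbove ⁻¹' ({x, y} : Set (Fin (n+3))))) :=
    fun k x y h1 h2 => hmainlow _ (broken_preimage_pair (n := n+1) k x y h1 h2)
  set x0 : Fin (n+3) := ⟨0, by omega⟩ with hx0
  set x2 : Fin (n+3) := ⟨2, by omega⟩ with hx2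
  have base : TCof M (genHornIncl (n+2) ({x0, x2} : Set (Fin (n+3)))) := pairBase M hcof hsp hn
  have step0j : ∀ j' : Fin (n+3), 3 ≤ (j':ℕ) → (j':ℕ) < n+2 →
      TCof M (genHornIncl (n+2) ({x0, j'} : Set (Fin (n+3)))) := by
    intro j' h3 hj'
    refine horn_hop M hcof (S1 := {x0, x2}) (S2 := {x0, j'}) j' x2 ?_ ?_ ?_ ?_ ?_ base
    · simp only [mem_pair_iff, Fin.ext_iff, hx0, hx2]; omega
    · simp only [mem_pair_iff, Fin.ext_iff, hx0, hx2]; omega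
    · ext v; simp only [Set.mem_insert_iff, mem_pair_iff]; tauto
    · exact hlow j' x0 x2 (by simp [hx0, hx2]) (by simp [hx0, hx2]; omega)
    · exact hlow x2 x0 j' (by simp only [hx0, hx2, Fin.val_mk]; omega) (by simp [hx0, hx2]; omega)
  have stepij : ∀ i' j' : Fin (n+3), 0 < (i':ℕ) → (i':ℕ)+1 < (j':ℕ) → (j':ℕ) < n+2 →
      TCof M (genHornIncl (n+2) ({i', j'} : Set (Fin (n+3)))) := by
    intro i' j' hi' hij' hj'
    have h0j : TCof M (genHornIncl (n+2) ({x0, j'} : Set (Fin (n+3)))) := by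
      rcases Nat.lt_or_ge (j':ℕ) 3 with h | h
      · have : (j':ℕ) = 2 := by omega
        have : j' = x2 := by rw [Fin.ext_iff]; simpa [hx2] using this
        rw [this]; exact base
      · exact step0j j' h hj'
    refine horn_hop M hcof (S1 := {x0, j'}) (S2 := {i', j'}) i' x0 ?_ ?_ ?_ ?_ ?_ h0j
    · simp only [mem_pair_iff, Fin.ext_iff, hx0]; omega
    · simp only [mem_pair_iff, Fin.ext_iff, hx0]; omega
    · ext v; simp only [Set.mem_insert_iff, mem_pair_iff]; tauto
    · exact hlow i' x0 j' (by simp only [hx0, Fin.val_mk]; omega) (by simp only [hx0, Fin.val_mk]; omega)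
    · exact hlow x0 i' j' (by simp [hx0]; omega) (by simp only [hx0, Fin.val_mk]; omega)
  rcases Nat.lt_or_ge (j:ℕ) (n+2) with hjtop | hjtop
  · -- j < n+2
    rcases Nat.eq_zero_or_pos (i:ℕ) with hi0 | hi0
    · have hi : i = x0 := by rw [Fin.ext_iff]; simpa [hx0] using hi0
      rw [hi]
      rcases Nat.lt_or_ge (j:ℕ) 3 with h | h
      · have : j = x2 := by rw [Fin.ext_iff]; simp only [hx2]; omega
        rw [this]; exact base
      · exact step0j j h hjtop
    · exact stepij i j hi0 hij hjtop
  · -- j = n+2 (top)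
    have hjval : (j:ℕ) = n+2 := by omega
    have hi0 : 0 < (i:ℕ) := hcond.resolve_right (by omega)
    rcases Nat.lt_or_ge (i:ℕ) n with hin | hin
    · -- i ≤ n-1
      set y : Fin (n+3) := ⟨n+1, by omega⟩ with hy
      have hxy : TCof M (genHornIncl (n+2) ({i, y} : Set (Fin (n+3)))) :=
        stepij i y hi0 (by simp [hy]; omega) (by simp [hy])
      refine horn_hop M hcof (S1 := {i, y}) (S2 := {i, j}) j y ?_ ?_ ?_ ?_ ?_ hxy
      · simp only [mem_pair_iff, Fin.ext_iff, hy]; omega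
      · simp only [mem_pair_iff, Fin.ext_iff, hy]; omega
      · ext v; simp only [Set.mem_insert_iff, mem_pair_iff]; tauto
      · exact hlow j i y (by simp [hy]; omega) (by simp only [hy, Fin.val_mk]; omega)
      · exact hlow y i j (by omega) (by simp only [hy, Fin.val_mk]; omega)
    · -- i = n
      have hival : (i:ℕ) = n := by omega
      have h0n : TCof M (genHornIncl (n+2) ({x0, i} : Set (Fin (n+3)))) := by
        rcases Nat.lt_or_ge (i:ℕ) 3 with h | h
        · have : i = x2 := by rw [Fin.ext_iff]; simp only [hx2]; omega
          rw [this]; exact base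
        · exact step0j i h (by omega)
      refine horn_hop M hcof (S1 := {x0, i}) (S2 := {i, j}) j x0 ?_ ?_ ?_ ?_ ?_ h0n
      · simp only [mem_pair_iff, Fin.ext_iff, hx0]; omega
      · simp only [mem_pair_iff, Fin.ext_iff, hx0]; omega
      · ext v; simp only [Set.mem_insert_iff, mem_pair_iff]; tauto
      · exact hlow j x0 i (by simp only [hx0, Fin.val_mk]; omega) (by simp [hx0]; omega)
      · exact hlow x0 i j (by omega) (by simp only [hx0, Fin.val_mk]; omega)

end MainAssembly
end Q2S

namespace Q2S
section Dim3

universe u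
variable (M : ModelStructure SSet.{u})

def tri3A : Triangulation 3 where
  tris := {(0,1,2),(0,2,3)}
  card_eq := by decide
  lt₁ := by decide
  lt₂ := by decide
  le_n := by decide
  noncrossing := by
    rintro p q r s ⟨t, ht, hpq⟩ ⟨t', ht', hrs⟩ ⟨h1, h2, h3⟩
    simp only [Finset.mem_insert, Finset.mem_singleton] at ht ht'
    rcases ht with rfl|rfl <;> rcases ht' with rfl|rfl <;>
      rcases hpq with h|h|h <;> rcases hrs with h'|h'|h' <;>
      simp_all [Prod.ext_iff] <;> omega

def tri3B : Triangulation 3 where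
  tris := {(1,2,3),(0,1,3)}
  card_eq := by decide
  lt₁ := by decide
  lt₂ := by decide
  le_n := by decide
  noncrossing := by
    rintro p q r s ⟨t, ht, hpq⟩ ⟨t', ht', hrs⟩ ⟨h1, h2, h3⟩
    simp only [Finset.mem_insert, Finset.mem_singleton] at ht ht'
    rcases ht with rfl|rfl <;> rcases ht' with rfl|rfl <;>
      rcases hpq with h|h|h <;> rcases hrs with h'|h'|h' <;>
      simp_all [Prod.ext_iff] <;> omega

lemma dim3_case (hcof : M.Cof = MorphismProperty.monomorphisms SSet.{u})
    (hsp : ∀ m, 2 ≤ m → ∀ T : Triangulation m, TCof M (twoSegalSpineIncl m T))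
    (S : Set (Fin 4)) (hS : BrokenSet S) : TCof M (genHornIncl 3 S) := by
  obtain ⟨a, b, c, d, hab, hbc, hcd, hpat⟩ := hS
  rw [Fin.lt_iff_val_lt_val] at hab hbc hcd
  have ha4 : (a:ℕ) < 4 := a.isLt
  have hb4 : (b:ℕ) < 4 := b.isLt
  have hc4 : (c:ℕ) < 4 := c.isLt
  have hd4 : (d:ℕ) < 4 := d.isLt
  have hav : (a:ℕ) = 0 := by omega
  have hbv : (b:ℕ) = 1 := by omega
  have hcv : (c:ℕ) = 2 := by omega
  have hdv : (d:ℕ) = 3 := by omega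
  have hvmem : ∀ v : Fin 4, (v:ℕ) = 0 ∧ v = a ∨ (v:ℕ) = 1 ∧ v = b ∨
      (v:ℕ) = 2 ∧ v = c ∨ (v:ℕ) = 3 ∧ v = d := by
    intro v
    have hv4 : (v:ℕ) < 4 := v.isLt
    rcases Nat.lt_or_ge (v:ℕ) 1 with h|h
    · exact Or.inl ⟨by omega, by rw [Fin.ext_iff]; omega⟩
    rcases Nat.lt_or_ge (v:ℕ) 2 with h'|h'
    · exact Or.inr (Or.inl ⟨by omega, by rw [Fin.ext_iff]; omega⟩)
    rcases Nat.lt_or_ge (v:ℕ) 3 with h''|h''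
    · exact Or.inr (Or.inr (Or.inl ⟨by omega, by rw [Fin.ext_iff]; omega⟩))
    · exact Or.inr (Or.inr (Or.inr ⟨by omega, by rw [Fin.ext_iff]; omega⟩))
  rcases hpat with ⟨haS, hcS, hbS, hdS⟩ | ⟨hbS, hdS, haS, hcS⟩
  · -- S = {a, c}, values {0,2}; horn = spine of tri3B
    have hmem : ∀ v ∈ S, v = a ∨ v = c := by
      intro v hv
      rcases hvmem v with ⟨_,h⟩|⟨_,h⟩|⟨_,h⟩|⟨_,h⟩
      · exact Or.inl h
      · exact absurd (h ▸ hv) hbS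
      · exact Or.inr h
      · exact absurd (h ▸ hv) hdS
    have hiff : ∀ ⦃m : SimplexCategoryᵒᵖ⦄ (α : Δ[3].obj m),
        (hornSub 3 S).P α ↔ (spineSub 3 tri3B).P α := by
      intro m α
      constructor
      · rintro ⟨i, hiS, hmiss⟩
        rcases hmem i hiS with rfl | rfl
        · refine ⟨(1,2,3), by decide, fun k => ?_⟩
          have h4 := (SSet.stdSimplex.asOrderHom α k).isLt
          have hne : (SSet.stdSimplex.asOrderHom α k : ℕ) ≠ 0 := by
            intro h0
            exact hmiss k (by rw [Fin.ext_iff]; omega)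
          show (SSet.stdSimplex.asOrderHom α k : ℕ) = 1 ∨ (SSet.stdSimplex.asOrderHom α k : ℕ) = 2 ∨
            (SSet.stdSimplex.asOrderHom α k : ℕ) = 3
          omega
        · refine ⟨(0,1,3), by decide, fun k => ?_⟩
          have h4 := (SSet.stdSimplex.asOrderHom α k).isLt
          have hne : (SSet.stdSimplex.asOrderHom α k : ℕ) ≠ 2 := by
            intro h0
            exact hmiss k (by rw [Fin.ext_iff]; omega)
          show (SSet.stdSimplex.asOrderHom α k : ℕ) = 0 ∨ (SSet.stdSimplex.asOrderHom α k : ℕ) = 1 ∨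
            (SSet.stdSimplex.asOrderHom α k : ℕ) = 3
          omega
      · rintro ⟨t, ht, hvert⟩
        simp only [tri3B, Finset.mem_insert, Finset.mem_singleton] at ht
        rcases ht with rfl | rfl
        · refine ⟨a, haS, fun k => ?_⟩
          have hv2 : (SSet.stdSimplex.asOrderHom α k : ℕ) = 1 ∨ (SSet.stdSimplex.asOrderHom α k : ℕ) = 2 ∨
            (SSet.stdSimplex.asOrderHom α k : ℕ) = 3 := hvert k
          intro he
          rw [Fin.ext_iff, hav] at he
          omega
        · refine ⟨c, hcS, fun k => ?_⟩
          have hv2 : (SSet.stdSimplex.asOrderHom α k : ℕ) = 0 ∨ (SSet.stdSimplex.asOrderHom α k : ℕ) = 1 ∨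
            (SSet.stdSimplex.asOrderHom α k : ℕ) = 3 := hvert k
          intro he
          rw [Fin.ext_iff, hcv] at he
          omega
    refine tcof_of_arrow_iso M (Sub.isoOfEq (hornSub 3 S) (spineSub 3 tri3B) hiff)
      (Iso.refl Δ[3]) ?_ (hsp 3 (by omega) tri3B)
    apply SSet.hom_ext; intro m; ext x; rfl
  · -- S = {b, d}, values {1,3}; horn = spine of tri3A
    have hmem : ∀ v ∈ S, v = b ∨ v = d := by
      intro v hv
      rcases hvmem v with ⟨_,h⟩|⟨_,h⟩|⟨_,h⟩|⟨_,h⟩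
      · exact absurd (h ▸ hv) haS
      · exact Or.inl h
      · exact absurd (h ▸ hv) hcS
      · exact Or.inr h
    have hiff : ∀ ⦃m : SimplexCategoryᵒᵖ⦄ (α : Δ[3].obj m),
        (hornSub 3 S).P α ↔ (spineSub 3 tri3A).P α := by
      intro m α
      constructor
      · rintro ⟨i, hiS, hmiss⟩
        rcases hmem i hiS with rfl | rfl
        · refine ⟨(0,2,3), by decide, fun k => ?_⟩
          have h4 := (SSet.stdSimplex.asOrderHom α k).isLt
          have hne : (SSet.stdSimplex.asOrderHom α k : ℕ) ≠ 1 := by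
            intro h0
            exact hmiss k (by rw [Fin.ext_iff]; omega)
          show (SSet.stdSimplex.asOrderHom α k : ℕ) = 0 ∨ (SSet.stdSimplex.asOrderHom α k : ℕ) = 2 ∨
            (SSet.stdSimplex.asOrderHom α k : ℕ) = 3
          omega
        · refine ⟨(0,1,2), by decide, fun k => ?_⟩
          have h4 := (SSet.stdSimplex.asOrderHom α k).isLt
          have hne : (SSet.stdSimplex.asOrderHom α k : ℕ) ≠ 3 := by
            intro h0
            exact hmiss k (by rw [Fin.ext_iff]; omega)
          show (SSet.stdSimplex.asOrderHom α k : ℕ) = 0 ∨ (SSet.stdSimplex.asOrderHom α k : ℕ) = 1 ∨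
            (SSet.stdSimplex.asOrderHom α k : ℕ) = 2
          omega
      · rintro ⟨t, ht, hvert⟩
        simp only [tri3A, Finset.mem_insert, Finset.mem_singleton] at ht
        rcases ht with rfl | rfl
        · refine ⟨d, hdS, fun k => ?_⟩
          have hv2 : (SSet.stdSimplex.asOrderHom α k : ℕ) = 0 ∨ (SSet.stdSimplex.asOrderHom α k : ℕ) = 1 ∨
            (SSet.stdSimplex.asOrderHom α k : ℕ) = 2 := hvert k
          intro he
          rw [Fin.ext_iff, hdv] at he
          omega
        · refine ⟨b, hbS, fun k => ?_⟩
          have hv2 : (SSet.stdSimplex.asOrderHom α k : ℕ) = 0 ∨ (SSet.stdSimplex.asOrderHom α k : ℕ) = 2 ∨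
            (SSet.stdSimplex.asOrderHom α k : ℕ) = 3 := hvert k
          intro he
          rw [Fin.ext_iff, hbv] at he
          omega
    refine tcof_of_arrow_iso M (Sub.isoOfEq (hornSub 3 S) (spineSub 3 tri3A) hiff)
      (Iso.refl Δ[3]) ?_ (hsp 3 (by omega) tri3A)
    apply SSet.hom_ext; intro m; ext x; rfl

end Dim3

section FullMain

universe u
variable (M : ModelStructure SSet.{u})

lemma broken_card_ge {n : ℕ} {S : Set (Fin (n+1))} (h : BrokenSet S) :
    2 ≤ S.ncard := by
  obtain ⟨a, b, c, d, hab, hbc, hcd, hpat⟩ := h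
  rcases hpat with ⟨h1, h2, _, _⟩ | ⟨h1, h2, _, _⟩
  · have hsub : ({a, c} : Set (Fin (n+1))) ⊆ S := by
      intro v hv; rcases (mem_pair_iff v a c).1 hv with rfl|rfl
      · exact h1
      · exact h2
    have := Set.ncard_le_ncard hsub S.toFinite
    rwa [Set.ncard_pair (ne_of_lt (hab.trans hbc))] at this
  · have hsub : ({b, d} : Set (Fin (n+1))) ⊆ S := by
      intro v hv; rcases (mem_pair_iff v b d).1 hv with rfl|rfl
      · exact h1
      · exact h2
    have := Set.ncard_le_ncard hsub S.toFinite
    rwa [Set.ncard_pair (ne_of_lt (hbc.trans hcd))] at this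

lemma main_aux (hcof : M.Cof = MorphismProperty.monomorphisms SSet.{u})
    (hsp : ∀ m, 2 ≤ m → ∀ T : Triangulation m, TCof M (twoSegalSpineIncl m T)) :
    ∀ (n : ℕ) (S : Set (Fin (n+4))), BrokenSet S → TCof M (genHornIncl (n+3) S) := by
  intro n
  induction n with
  | zero => exact fun S hS => dim3_case M hcof hsp S hS
  | succ n IH =>
    have inner : ∀ (N : ℕ) (S : Set (Fin (n+5))), S.ncard ≤ N → BrokenSet S →
        TCof M (genHornIncl (n+4) S) := by
      intro N
      induction N with
      | zero =>
        intro S hc hS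
        exact absurd hc (by have := broken_card_ge hS; omega)
      | succ N IHN =>
        intro S hc hS
        by_cases h2 : S.ncard ≤ 2
        · -- the pair case
          have hS2 : S.ncard = 2 := by
            have := broken_card_ge hS; omega
          obtain ⟨x, y, hxy, hSxy⟩ := Set.ncard_eq_two.1 hS2
          rcases Nat.lt_or_ge (x:ℕ) (y:ℕ) with hlt | hge
          · rw [hSxy]
            rw [hSxy] at hS
            obtain ⟨hc1, hc2⟩ := pair_cond_of_broken hlt hS
            exact pairMain M hcof hsp (by omega) IH x y hc1 hc2
          · have hlt : (y:ℕ) < (x:ℕ) := by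
              rcases Nat.lt_or_ge (y:ℕ) (x:ℕ) with h|h
              · exact h
              · exact absurd (Fin.ext (by omega)) hxy
            rw [hSxy, Set.pair_comm]
            rw [hSxy, Set.pair_comm] at hS
            obtain ⟨hc1, hc2⟩ := pair_cond_of_broken hlt hS
            exact pairMain M hcof hsp (by omega) IH y x hc1 hc2
        · -- at least three faces
          obtain ⟨a, b, c, d, hab, hbc, hcd, hpat⟩ := hS
          rcases hpat with ⟨haS, hcS, hbS, hdS⟩ | ⟨hbS, hdS, haS, hcS⟩
          · have hex : ∃ s ∈ S, s ≠ a ∧ s ≠ c := by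
              by_contra hcon
              push_neg at hcon
              have hsub : S ⊆ {a, c} := by
                intro v hv
                by_cases hva : v = a
                · exact (mem_pair_iff v a c).2 (Or.inl hva)
                · exact (mem_pair_iff v a c).2 (Or.inr (hcon v hv hva))
              have h1 := Set.ncard_le_ncard hsub (Set.toFinite _)
              rw [Set.ncard_pair (ne_of_lt (hab.trans hbc))] at h1
              omega
            obtain ⟨s, hsS, hsa, hsc⟩ := hex
            have hsb : b ≠ s := fun h => hbS (h ▸ hsS)
            have hsd : d ≠ s := fun h => hdS (h ▸ hsS)
            set S' : Set (Fin (n+5)) := S \ {s} with hS'def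
            have hs' : s ∉ S' := by simp [hS'def]
            have hins : insert s S' = S := by
              rw [hS'def, Set.insert_diff_singleton]
              exact Set.insert_eq_self.2 hsS
            have haS' : a ∈ S' := ⟨haS, by simp [hsa.symm]⟩
            have hcS' : c ∈ S' := ⟨hcS, by simp [hsc.symm]⟩
            have hbS' : b ∉ S' := fun h => hbS h.1
            have hdS' : d ∉ S' := fun h => hdS h.1
            have hbroke' : BrokenSet S' :=
              ⟨a, b, c, d, hab, hbc, hcd, Or.inl ⟨haS', hcS', hbS', hdS'⟩⟩
            have hcard' : S'.ncard ≤ N := by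
              rw [hS'def, Set.ncard_diff_singleton_of_mem hsS]
              have := broken_card_ge (⟨a, b, c, d, hab, hbc, hcd,
                Or.inl ⟨haS, hcS, hbS, hdS⟩⟩ : BrokenSet S)
              omega
            have hlow : TCof M (genHornIncl (n+3) (s.succAbove ⁻¹' S')) :=
              IH _ (broken_preimage_pattern s S' a b c d hab hbc hcd
                (Or.inl ⟨haS', hcS', hbS', hdS'⟩)
                (fun h => hsa (h.symm)) hsb (fun h => hsc (h.symm)) hsd)
            have hstep := hornAttach M hcof s S' hs' hlow
            have hfin := tcof_horn_of_le M hcof (Set.subset_insert s S') hstep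
              (IHN S' hcard' hbroke')
            rwa [hins] at hfin
          · have hex : ∃ s ∈ S, s ≠ b ∧ s ≠ d := by
              by_contra hcon
              push_neg at hcon
              have hsub : S ⊆ {b, d} := by
                intro v hv
                by_cases hvb : v = b
                · exact (mem_pair_iff v b d).2 (Or.inl hvb)
                · exact (mem_pair_iff v b d).2 (Or.inr (hcon v hv hvb))
              have h1 := Set.ncard_le_ncard hsub (Set.toFinite _)
              rw [Set.ncard_pair (ne_of_lt (hbc.trans hcd))] at h1
              omega
            obtain ⟨s, hsS, hsb, hsd⟩ := hex
            have hsa : a ≠ s := fun h => haS (h ▸ hsS)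
            have hsc : c ≠ s := fun h => hcS (h ▸ hsS)
            set S' : Set (Fin (n+5)) := S \ {s} with hS'def
            have hs' : s ∉ S' := by simp [hS'def]
            have hins : insert s S' = S := by
              rw [hS'def, Set.insert_diff_singleton]
              exact Set.insert_eq_self.2 hsS
            have hbS' : b ∈ S' := ⟨hbS, by simp [hsb.symm]⟩
            have hdS' : d ∈ S' := ⟨hdS, by simp [hsd.symm]⟩
            have haS' : a ∉ S' := fun h => haS h.1
            have hcS' : c ∉ S' := fun h => hcS h.1
            have hbroke' : BrokenSet S' :=
              ⟨a, b, c, d, hab, hbc, hcd, Or.inr ⟨hbS', hdS', haS', hcS'⟩⟩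
            have hcard' : S'.ncard ≤ N := by
              rw [hS'def, Set.ncard_diff_singleton_of_mem hsS]
              have := broken_card_ge (⟨a, b, c, d, hab, hbc, hcd,
                Or.inr ⟨hbS, hdS, haS, hcS⟩⟩ : BrokenSet S)
              omega
            have hlow : TCof M (genHornIncl (n+3) (s.succAbove ⁻¹' S')) :=
              IH _ (broken_preimage_pattern s S' a b c d hab hbc hcd
                (Or.inr ⟨hbS', hdS', haS', hcS'⟩)
                hsa (fun h => hsb (h.symm)) hsc (fun h => hsd (h.symm)))
            have hstep := hornAttach M hcof s S' hs' hlow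
            have hfin := tcof_horn_of_le M hcof (Set.subset_insert s S') hstep
              (IHN S' hcard' hbroke')
            rwa [hins] at hfin
    exact fun S hS => inner S.ncard S le_rfl hS

end FullMain
end Q2S

/-- If `sSet` carries a model structure whose cofibrations are the
monomorphisms in which every 2-Segal spine inclusion is a weak equivalence, then every
generalized 2-Segal horn inclusion `Λ^S[n] ↪ Δ[n]` is a weak equivalence. -/
theorem genTwoSegalHorn_weakEquivalence_of_spines (M : Q2S.ModelStructure SSet)
    (hcof : M.Cof = MorphismProperty.monomorphisms SSet)
    (hspine : ∀ (n : ℕ), 3 ≤ n → ∀ T : Q2S.Triangulation n, M.W (Q2S.twoSegalSpineIncl n T))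
    (n : ℕ) (hn : 3 ≤ n) (S : Set (Fin (n + 1))) (hS : Q2S.BrokenSet S) :
    M.W (Q2S.genHornIncl n S) := by
  have hsp : ∀ m, 2 ≤ m → ∀ T : Q2S.Triangulation m, Q2S.TCof M (Q2S.twoSegalSpineIncl m T) :=
    Q2S.tcof_spine M hcof hspine
  obtain ⟨n', rfl⟩ : ∃ n', n = n' + 3 := ⟨n - 3, by omega⟩
  exact (Q2S.main_aux M hcof hsp n' S hS).2
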